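/- arXiv:1805.10213 — 5 statements merged into one kernel-verified Lean document; each statement's English description precedes it below -/
import Mathlib

section
/- Let p ∈ [1,∞) and γ ∈ (p−1, 2p−1). Then every u ∈ W^{2,p}((0,∞), w_γ) has a bounded continuous representative on [0,∞), u(x) → 0 as x → ∞, and sup_{x ≥ 0} |u(x)| ≤ C_{p,γ} ‖u‖_{W^{2,p}((0,∞), w_γ)}. -/
/-!
Write `q = (γ + 1) / p ∈ (1, 2)` and `‖·‖` for the norm of `L^p((0,∞), x^γ dx)`. By Jensen's
inequality and `x^γ ≥ T^γ` on `[T, 2T]`, `∫_T^{2T} |f| ≤ T^(1-q) ‖f‖`. On such a dyadic interval a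
function is bounded by its mean plus the total variation, so
`|u x| ≤ T^(-q) ‖u‖ + T^(1-q) ‖u'‖` for `x ∈ [T, 2T]`: taking `T = x` gives the bound on `[1, ∞)`
and the decay at infinity. Near `0` the dyadic bounds for `u''` sum to a geometric series
(as `1 - q < 0`), so `|u' x| ≲ 1 + x^(1-q)`, which is integrable on `(0, 1]` because `q < 2`.
Hence `u` extends continuously to `0` and is bounded on `(0, 1]` by `|u 1| + ∫_0^1 |u'|`.
-/

open MeasureTheory Set Filter Topology

lemma integral_abs_le_measureReal_rpow_mul {α : Type*} [MeasurableSpace α] {μ : Measure α}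
    [IsFiniteMeasure μ] [NeZero μ] {p : ℝ} (hp : 1 ≤ p) {f : α → ℝ}
    (hf : Integrable f μ) (hfp : Integrable (fun x => |f x| ^ p) μ) :
    ∫ x, |f x| ∂μ ≤ μ.real univ ^ (1 - 1 / p) * (∫ x, |f x| ^ p ∂μ) ^ (1 / p) := by
  have hp0 : 0 < p := by linarith
  have hm : 0 < μ.real univ := by
    simp [measureReal_def, ENNReal.toReal_pos_iff, measure_lt_top, NeZero.ne μ]
  have jensen : (⨍ x, |f x| ∂μ) ^ p ≤ ⨍ x, |f x| ^ p ∂μ :=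
    (convexOn_rpow hp).map_average_le (Real.continuous_rpow_const hp0.le).continuousOn
      isClosed_Ici (ae_of_all _ fun x => abs_nonneg (f x)) hf.abs hfp
  rw [average_eq, average_eq, smul_eq_mul, smul_eq_mul] at jensen
  have hA : 0 ≤ ∫ x, |f x| ∂μ := integral_nonneg fun x => abs_nonneg _
  have hB : 0 ≤ ∫ x, |f x| ^ p ∂μ := integral_nonneg fun x => by positivity
  have := Real.rpow_le_rpow (by positivity) jensen (by positivity : 0 ≤ 1 / p)
  rw [← Real.rpow_mul (by positivity), mul_one_div_cancel hp0.ne', Real.rpow_one,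
    Real.mul_rpow (by positivity) hB, Real.inv_rpow hm.le, inv_mul_le_iff₀ hm] at this
  calc ∫ x, |f x| ∂μ
      ≤ μ.real univ * ((μ.real univ ^ (1 / p))⁻¹ * (∫ x, |f x| ^ p ∂μ) ^ (1 / p)) := this
    _ = _ := by rw [Real.rpow_sub hm, Real.rpow_one]; field_simp

lemma abs_le_average_add_integral_abs_deriv {f f' : ℝ → ℝ} {a b : ℝ} (hab : a < b)
    (hf : ∀ x ∈ Icc a b, HasDerivAt f (f' x) x) (hf' : IntervalIntegrable f' volume a b)
    {x : ℝ} (hx : x ∈ Icc a b) :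
    |f x| ≤ (b - a)⁻¹ * (∫ t in a..b, |f t|) + ∫ t in a..b, |f' t| := by
  have hfc : ContinuousOn f (Icc a b) := fun y hy => (hf y hy).continuousAt.continuousWithinAt
  obtain ⟨x₀, hx₀, hmin⟩ := exists_le_setAverage (μ := volume) (s := Ioc a b) (by simp [hab])
    (by simp) (hfc.abs.integrableOn_Icc.mono_set Ioc_subset_Icc_self)
  rw [setAverage_eq, Real.volume_real_Ioc_of_le hab.le, smul_eq_mul,
    ← intervalIntegral.integral_of_le hab.le] at hmin
  have hsub : uIcc x₀ x ⊆ uIcc a b := by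
    rw [uIcc_of_le hab.le]; exact uIcc_subset_Icc (Ioc_subset_Icc_self hx₀) hx
  have hftc : ∫ t in x₀..x, f' t = f x - f x₀ :=
    intervalIntegral.integral_eq_sub_of_hasDerivAt
      (fun y hy => hf y (uIcc_of_le hab.le ▸ hsub hy)) (hf'.mono_set hsub)
  have hvar : |f x - f x₀| ≤ ∫ t in a..b, |f' t| := by
    rw [← hftc, intervalIntegral.integral_of_le hab.le, ← Real.norm_eq_abs]
    refine intervalIntegral.norm_integral_le_integral_norm_uIoc.trans
      (setIntegral_mono_set ?_ (ae_of_all _ fun t => norm_nonneg _) ?_)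
    · exact ((intervalIntegrable_iff_integrableOn_Ioc_of_le hab.le).1 hf').norm
    · rw [← uIoc_of_le hab.le]
      exact (uIoc_subset_uIoc_of_uIcc_subset_uIcc hsub).eventuallyLE
  linarith [abs_sub_abs_le_abs_sub (f x) (f x₀)]

lemma abs_le_abs_add_integral_abs_deriv {f f' : ℝ → ℝ} {a b : ℝ} (hab : a ≤ b)
    (hf : ∀ x ∈ Icc a b, HasDerivAt f (f' x) x) (hf' : IntervalIntegrable f' volume a b) :
    |f a| ≤ |f b| + ∫ t in a..b, |f' t| := by
  have hftc : ∫ t in a..b, f' t = f b - f a :=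
    intervalIntegral.integral_eq_sub_of_hasDerivAt (fun x hx => hf x (uIcc_of_le hab ▸ hx)) hf'
  have := intervalIntegral.abs_integral_le_integral_abs (f := f') (μ := volume) hab
  rw [hftc] at this
  linarith [abs_sub_abs_le_abs_sub (f a) (f b), abs_sub_comm (f a) (f b)]

lemma aestronglyMeasurable_of_hasDerivAt {g g' : ℝ → ℝ} {s : Set ℝ} (hs : MeasurableSet s)
    (hg : ∀ x ∈ s, HasDerivAt g (g' x) x) : AEStronglyMeasurable g' (volume.restrict s) :=
  (measurable_deriv g).aestronglyMeasurable.congr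
    ((ae_restrict_iff' hs).2 (ae_of_all _ fun x hx => (hg x hx).deriv))

lemma integral_abs_le_of_dyadic {g : ℝ → ℝ} {K s : ℝ} (hK : 0 ≤ K) (hs : s < 0)
    (hg : ∀ a b, 0 < a → 0 < b → IntervalIntegrable g volume a b)
    (hdy : ∀ T, 0 < T → ∫ t in T..2 * T, |g t| ≤ K * T ^ s) {x : ℝ} (hx : x ∈ Ioc 0 1) :
    ∫ t in x..1, |g t| ≤ K / (1 - 2 ^ s) * x ^ s := by
  set C := K / (1 - 2 ^ s)
  -- `C` solves `K + C 2^s = C`, which is what the step `[x, 1] = [x, 2x] ∪ [2x, 1]` needs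
  have h2s : (2:ℝ) ^ s < 1 := Real.rpow_lt_one_of_one_lt_of_neg one_lt_two hs
  have h2s' : 0 < (2:ℝ) ^ s := Real.rpow_pos_of_pos two_pos s
  have hKC : K ≤ C := le_div_self hK (by linarith) (by linarith)
  have hstep : K + C * 2 ^ s = C := by
    simp only [C]; field_simp [(by linarith : 1 - (2:ℝ) ^ s ≠ 0)]; ring
  have habs : ∀ a b, 0 < a → 0 < b → IntervalIntegrable (fun t => |g t|) volume a b :=
    fun a b ha hb => (hg a b ha hb).abs
  suffices ∀ n : ℕ, ∀ x, (1 / 2 : ℝ) ^ n ≤ x → x ≤ 1 → ∫ t in x..1, |g t| ≤ C * x ^ s by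
    obtain ⟨n, hn⟩ := exists_pow_lt_of_lt_one hx.1 (by norm_num : (1 / 2 : ℝ) < 1)
    exact this n x hn.le hx.2
  intro n
  induction n with
  | zero =>
    intro x hx1 hx2
    obtain rfl : x = 1 := le_antisymm hx2 (by simpa using hx1)
    simpa using hK.trans hKC
  | succ n ih =>
    intro x hxn hx1
    have hx0 : 0 < x := lt_of_lt_of_le (by positivity) hxn
    have hdx := hdy x hx0
    rcases le_or_gt (1 / 2) x with hx | hx
    · calc ∫ t in x..1, |g t| ≤ ∫ t in x..2 * x, |g t| :=
            intervalIntegral.integral_mono_interval le_rfl hx1 (by linarith)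
              (ae_of_all _ fun t => abs_nonneg _) (habs _ _ hx0 (by linarith))
        _ ≤ C * x ^ s := hdx.trans (by gcongr)
    · have h2x : (1 / 2 : ℝ) ^ n ≤ 2 * x := by rw [pow_succ] at hxn; linarith
      rw [← intervalIntegral.integral_add_adjacent_intervals (habs x (2 * x) hx0 (by linarith))
        (habs (2 * x) 1 (by linarith) one_pos)]
      calc (∫ t in x..2 * x, |g t|) + ∫ t in 2 * x..1, |g t|
          ≤ K * x ^ s + C * (2 * x) ^ s := add_le_add hdx (ih _ h2x (by linarith))
        _ = (K + C * 2 ^ s) * x ^ s := by rw [Real.mul_rpow zero_le_two hx0.le]; ring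
        _ = C * x ^ s := by rw [hstep]

lemma intervalIntegrable_of_abs_le_rpow {g : ℝ → ℝ} {A B s : ℝ} (hs : -1 < s)
    (hm : AEStronglyMeasurable g (volume.restrict (Ioc 0 1)))
    (hg : ∀ x ∈ Ioc (0:ℝ) 1, |g x| ≤ A + B * x ^ s) :
    IntervalIntegrable g volume 0 1 ∧ ∫ t in (0:ℝ)..1, |g t| ≤ A + B / (s + 1) := by
  have hbound : IntervalIntegrable (fun x => A + B * x ^ s) volume 0 1 :=
    intervalIntegrable_const.add ((intervalIntegral.intervalIntegrable_rpow' hs).const_mul B)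
  have hle : ∀ᵐ x ∂volume.restrict (Ioc (0:ℝ) 1), ‖g x‖ ≤ A + B * x ^ s :=
    ae_restrict_of_forall_mem measurableSet_Ioc hg
  have hbound' := (intervalIntegrable_iff_integrableOn_Ioc_of_le zero_le_one).1 hbound
  have hgi : IntegrableOn g (Ioc 0 1) := hbound'.mono' hm hle
  refine ⟨(intervalIntegrable_iff_integrableOn_Ioc_of_le zero_le_one).2 hgi, ?_⟩
  calc ∫ t in (0:ℝ)..1, |g t| ≤ ∫ t in (0:ℝ)..1, (A + B * t ^ s) := by
        simp only [intervalIntegral.integral_of_le zero_le_one]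
        exact setIntegral_mono_on hgi.abs hbound' measurableSet_Ioc hg
    _ = A + B / (s + 1) := by
        rw [intervalIntegral.integral_add intervalIntegrable_const
          ((intervalIntegral.intervalIntegrable_rpow' hs).const_mul B),
          intervalIntegral.integral_const_mul, integral_rpow (Or.inl hs),
          Real.zero_rpow (by linarith), Real.one_rpow]
        simp; ring

lemma exists_continuousOn_Ici_eq_of_hasDerivAt {f f' : ℝ → ℝ}
    (hf : ∀ x ∈ Ioi (0:ℝ), HasDerivAt f (f' x) x) (hf' : IntervalIntegrable f' volume 0 1) :
    ∃ v : ℝ → ℝ, ContinuousOn v (Ici 0) ∧ (∀ x ∈ Ioi 0, v x = f x) ∧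
      ∀ x ∈ Icc (0:ℝ) 1, |v x| ≤ |f 1| + ∫ t in (0:ℝ)..1, |f' t| := by
  have h01 : uIcc (0:ℝ) 1 = Icc 0 1 := uIcc_of_le zero_le_one
  set w : ℝ → ℝ := fun x => f 1 - ∫ t in x..1, f' t
  have hw : ContinuousOn w (Icc 0 1) := by
    have := intervalIntegral.continuousOn_primitive_interval_left
      (h01 ▸ (intervalIntegrable_iff_integrableOn_Icc_of_le zero_le_one).1 hf')
    rw [h01] at this
    exact continuousOn_const.sub this
  have hwf : ∀ x ∈ Ioc (0:ℝ) 1, w x = f x := fun x hx => by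
    show f 1 - ∫ t in x..1, f' t = f x
    rw [intervalIntegral.integral_eq_sub_of_hasDerivAt
      (fun y hy => hf y (hx.1.trans_le (uIcc_of_le hx.2 ▸ hy).1))
      (hf'.mono_set (uIcc_subset_uIcc (h01 ▸ Ioc_subset_Icc_self hx) right_mem_uIcc))]
    ring
  set v : ℝ → ℝ := fun x => if 0 < x then f x else w x
  have hvw : ∀ x ∈ Icc (0:ℝ) 1, v x = w x := fun x hx => by
    rcases hx.1.eq_or_lt with rfl | hx0
    · simp [v]
    · simp [v, hx0, hwf x ⟨hx0, hx.2⟩]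
  refine ⟨v, fun x (hx : 0 ≤ x) => ?_, fun x (hx : 0 < x) => if_pos hx, fun x hx => ?_⟩
  · rcases hx.eq_or_lt with rfl | hx0
    · have h0 : (0:ℝ) ∈ Icc 0 1 := ⟨le_rfl, zero_le_one⟩
      exact ((hw 0 h0).congr hvw (hvw 0 h0)).mono_of_mem_nhdsWithin (Icc_mem_nhdsGE zero_lt_one)
    · exact (hf x hx0).continuousAt.continuousWithinAt.congr_of_eventuallyEq
        (eventually_nhdsWithin_of_eventually_nhds
          ((lt_mem_nhds hx0).mono fun y hy => if_pos hy)) (if_pos hx0)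
  · rw [hvw x hx]
    calc |w x| ≤ |f 1| + |∫ t in x..1, f' t| := abs_sub _ _
      _ ≤ |f 1| + ∫ t in (0:ℝ)..1, |f' t| := by
        gcongr
        rw [intervalIntegral.integral_of_le hx.2, intervalIntegral.integral_of_le zero_le_one]
        exact abs_integral_le_integral_abs.trans (setIntegral_mono_set hf'.1.abs
          (ae_of_all _ fun t => abs_nonneg _) (Ioc_subset_Ioc hx.1 le_rfl).eventuallyLE)

-- `‖f‖_{L^p((0,∞), x^γ dx)}`
noncomputable def weightedLpNorm (p γ : ℝ) (f : ℝ → ℝ) : ℝ :=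
  (∫ x in Ioi (0:ℝ), |f x| ^ p * x ^ γ) ^ (1 / p)

section Weighted

variable {p γ : ℝ} {f f' f'' : ℝ → ℝ}

lemma setIntegral_abs_rpow_mul_rpow_nonneg : 0 ≤ ∫ x in Ioi (0:ℝ), |f x| ^ p * x ^ γ :=
  setIntegral_nonneg measurableSet_Ioi fun x (hx : 0 < x) => by positivity

lemma weightedLpNorm_nonneg : 0 ≤ weightedLpNorm p γ f :=
  Real.rpow_nonneg setIntegral_abs_rpow_mul_rpow_nonneg _

lemma integrableOn_abs_rpow_Icc_of_weighted
    (hf : IntegrableOn (fun x => |f x| ^ p * x ^ γ) (Ioi 0)) {a b : ℝ} (ha : 0 < a) :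
    IntegrableOn (fun x => |f x| ^ p) (Icc a b) := by
  have hsub : Icc a b ⊆ Ioi 0 := fun x hx => ha.trans_le hx.1
  refine (((hf.mono_set hsub).mul_continuousOn (g' := fun x : ℝ => x ^ (-γ))
    (fun x hx => (Real.continuousAt_rpow_const _ _ (Or.inl (hsub hx).ne')).continuousWithinAt)
    isCompact_Icc)).congr_fun (fun x hx => ?_) measurableSet_Icc
  show |f x| ^ p * x ^ γ * x ^ (-γ) = _
  rw [mul_assoc, ← Real.rpow_add (hsub hx), add_neg_cancel, Real.rpow_zero, mul_one]

lemma setIntegral_abs_rpow_Ioc_le (hf : IntegrableOn (fun x => |f x| ^ p * x ^ γ) (Ioi 0))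
    (hγ : 0 ≤ γ) {a b : ℝ} (ha : 0 < a) :
    ∫ x in Ioc a b, |f x| ^ p ≤ a ^ (-γ) * ∫ x in Ioi 0, |f x| ^ p * x ^ γ := by
  have hsub : Ioc a b ⊆ Ioi 0 := fun x hx => ha.trans hx.1
  calc ∫ x in Ioc a b, |f x| ^ p ≤ ∫ x in Ioc a b, a ^ (-γ) * (|f x| ^ p * x ^ γ) := by
        refine setIntegral_mono_on ((integrableOn_abs_rpow_Icc_of_weighted hf ha).mono_set
          Ioc_subset_Icc_self) ((hf.mono_set hsub).const_mul _) measurableSet_Ioc fun x hx => ?_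
        have : 1 ≤ a ^ (-γ) * x ^ γ := by
          rw [Real.rpow_neg ha.le, ← div_eq_inv_mul, one_le_div (by positivity)]
          exact Real.rpow_le_rpow ha.le hx.1.le hγ
        calc |f x| ^ p = |f x| ^ p * 1 := (mul_one _).symm
          _ ≤ |f x| ^ p * (a ^ (-γ) * x ^ γ) := by gcongr
          _ = _ := by ring
    _ = a ^ (-γ) * ∫ x in Ioc a b, |f x| ^ p * x ^ γ := integral_const_mul _ _
    _ ≤ a ^ (-γ) * ∫ x in Ioi 0, |f x| ^ p * x ^ γ :=
        mul_le_mul_of_nonneg_left (setIntegral_mono_set hf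
          (ae_restrict_of_forall_mem measurableSet_Ioi fun x (hx : 0 < x) => by positivity)
          hsub.eventuallyLE) (by positivity)

lemma integrableOn_Icc_of_weighted (hf : IntegrableOn (fun x => |f x| ^ p * x ^ γ) (Ioi 0))
    (hp : 1 ≤ p) (hm : AEStronglyMeasurable f (volume.restrict (Ioi 0)))
    {a b : ℝ} (ha : 0 < a) : IntegrableOn f (Icc a b) := by
  have : IsFiniteMeasure (volume.restrict (Icc a b)) :=
    isFiniteMeasure_restrict.2 measure_Icc_lt_top.ne
  have hm' := hm.mono_measure
    (Measure.restrict_mono (fun x (hx : x ∈ Icc a b) => ha.trans_le hx.1) le_rfl)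
  refine (integrable_norm_iff hm').1 ?_
  simpa using integrable_norm_rpow_of_le hm' zero_le_one (by linarith) hp
    (integrableOn_abs_rpow_Icc_of_weighted hf ha)

lemma intervalIntegrable_of_weighted (hf : IntegrableOn (fun x => |f x| ^ p * x ^ γ) (Ioi 0))
    (hp : 1 ≤ p) (hm : AEStronglyMeasurable f (volume.restrict (Ioi 0))) {a b : ℝ}
    (ha : 0 < a) (hb : 0 < b) :
    IntervalIntegrable f volume a b :=
  (integrableOn_Icc_of_weighted hf hp hm (lt_min ha hb)).intervalIntegrable

lemma integral_abs_le_weightedLpNorm (hf : IntegrableOn (fun x => |f x| ^ p * x ^ γ) (Ioi 0))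
    (hp : 1 ≤ p) (hγ : 0 ≤ γ) (hm : AEStronglyMeasurable f (volume.restrict (Ioi 0)))
    {T : ℝ} (hT : 0 < T) :
    ∫ t in T..2 * T, |f t| ≤ T ^ (1 - (γ + 1) / p) * weightedLpNorm p γ f := by
  have hp0 : 0 < p := by linarith
  have : IsFiniteMeasure (volume.restrict (Ioc T (2 * T))) :=
    isFiniteMeasure_restrict.2 measure_Ioc_lt_top.ne
  have : NeZero (volume.restrict (Ioc T (2 * T))) := ⟨by simp; linarith⟩
  rw [intervalIntegral.integral_of_le (by linarith)]
  refine (integral_abs_le_measureReal_rpow_mul hp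
    ((integrableOn_Icc_of_weighted hf hp hm hT).mono_set Ioc_subset_Icc_self)
    ((integrableOn_abs_rpow_Icc_of_weighted hf hT).mono_set Ioc_subset_Icc_self)).trans ?_
  rw [measureReal_restrict_apply_univ, Real.volume_real_Ioc_of_le (by linarith),
    show 2 * T - T = T by ring]
  calc T ^ (1 - 1 / p) * (∫ x in Ioc T (2 * T), |f x| ^ p) ^ (1 / p)
      ≤ T ^ (1 - 1 / p) * (T ^ (-γ) * ∫ x in Ioi 0, |f x| ^ p * x ^ γ) ^ (1 / p) := by
        gcongr
        exact setIntegral_abs_rpow_Ioc_le hf hγ hT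
    _ = T ^ (1 - (γ + 1) / p) * weightedLpNorm p γ f := by
        rw [Real.mul_rpow (by positivity) setIntegral_abs_rpow_mul_rpow_nonneg,
          ← Real.rpow_mul hT.le, weightedLpNorm, ← mul_assoc, ← Real.rpow_add hT]
        congr 2
        field_simp
        ring

lemma abs_le_weightedLpNorm_of_hasDerivAt (hp : 1 ≤ p) (hγ : 0 ≤ γ)
    (hf : ∀ x ∈ Ioi 0, HasDerivAt f (f' x) x)
    (hfw : IntegrableOn (fun x => |f x| ^ p * x ^ γ) (Ioi 0))
    (hf'w : IntegrableOn (fun x => |f' x| ^ p * x ^ γ) (Ioi 0)) {T x : ℝ} (hT : 0 < T)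
    (hx : x ∈ Icc T (2 * T)) :
    |f x| ≤ T ^ (-((γ + 1) / p)) * weightedLpNorm p γ f +
      T ^ (1 - (γ + 1) / p) * weightedLpNorm p γ f' := by
  have hsub : Icc T (2 * T) ⊆ Ioi 0 := fun y hy => hT.trans_le hy.1
  have hfm : AEStronglyMeasurable f (volume.restrict (Ioi 0)) :=
    ContinuousOn.aestronglyMeasurable (fun y hy => (hf y hy).continuousAt.continuousWithinAt)
      measurableSet_Ioi
  have hf'm := aestronglyMeasurable_of_hasDerivAt measurableSet_Ioi hf
  have h := abs_le_average_add_integral_abs_deriv (by linarith) (fun y hy => hf y (hsub hy))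
    (intervalIntegrable_of_weighted hf'w hp hf'm hT (by linarith)) hx
  rw [show 2 * T - T = T by ring] at h
  calc |f x| ≤ T⁻¹ * (T ^ (1 - (γ + 1) / p) * weightedLpNorm p γ f) +
        T ^ (1 - (γ + 1) / p) * weightedLpNorm p γ f' := by
        refine h.trans (add_le_add ?_ ?_)
        · exact mul_le_mul_of_nonneg_left (integral_abs_le_weightedLpNorm hfw hp hγ hfm hT)
            (by positivity)
        · exact integral_abs_le_weightedLpNorm hf'w hp hγ hf'm hT
    _ = _ := by
        rw [Real.rpow_sub hT, Real.rpow_one, Real.rpow_neg hT.le]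
        field_simp

lemma abs_le_weightedLpNorm_of_mem_Ioc (hp : 1 ≤ p) (hγ : 0 ≤ γ) (hq : 1 < (γ + 1) / p)
    (hf : ∀ x ∈ Ioi 0, HasDerivAt f (f' x) x)
    (hfw : IntegrableOn (fun x => |f x| ^ p * x ^ γ) (Ioi 0))
    (hf'w : IntegrableOn (fun x => |f' x| ^ p * x ^ γ) (Ioi 0)) {x : ℝ} (hx : x ∈ Ioc 0 1) :
    |f x| ≤ weightedLpNorm p γ f + weightedLpNorm p γ f' +
      weightedLpNorm p γ f' / (1 - 2 ^ (1 - (γ + 1) / p)) * x ^ (1 - (γ + 1) / p) := by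
  have hf'm := aestronglyMeasurable_of_hasDerivAt measurableSet_Ioi hf
  have hf'i : ∀ a b : ℝ, 0 < a → 0 < b → IntervalIntegrable f' volume a b :=
    fun a b ha hb => intervalIntegrable_of_weighted hf'w hp hf'm ha hb
  have hf1 : |f 1| ≤ weightedLpNorm p γ f + weightedLpNorm p γ f' := by
    simpa using abs_le_weightedLpNorm_of_hasDerivAt hp hγ hf hfw hf'w one_pos
      ⟨le_rfl, by norm_num⟩
  have hvar := integral_abs_le_of_dyadic weightedLpNorm_nonneg (by linarith) hf'i
    (fun T hT => (integral_abs_le_weightedLpNorm hf'w hp hγ hf'm hT).trans_eq (mul_comm _ _)) hx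
  linarith [abs_le_abs_add_integral_abs_deriv hx.2 (fun y hy => hf y (hx.1.trans_le hy.1))
    (hf'i x 1 hx.1 one_pos)]

lemma abs_le_weightedLpNorm_of_one_le (hp : 1 ≤ p) (hγ : 0 ≤ γ) (hq : 1 ≤ (γ + 1) / p)
    (hf : ∀ x ∈ Ioi 0, HasDerivAt f (f' x) x)
    (hfw : IntegrableOn (fun x => |f x| ^ p * x ^ γ) (Ioi 0))
    (hf'w : IntegrableOn (fun x => |f' x| ^ p * x ^ γ) (Ioi 0)) {x : ℝ} (hx : 1 ≤ x) :
    |f x| ≤ weightedLpNorm p γ f + weightedLpNorm p γ f' := by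
  have hx0 : 0 < x := zero_lt_one.trans_le hx
  refine (abs_le_weightedLpNorm_of_hasDerivAt hp hγ hf hfw hf'w hx0 ⟨le_rfl, by linarith⟩).trans
    (add_le_add (mul_le_of_le_one_left weightedLpNorm_nonneg ?_)
      (mul_le_of_le_one_left weightedLpNorm_nonneg ?_)) <;>
  exact Real.rpow_le_one_of_one_le_of_nonpos hx (by linarith)

lemma tendsto_atTop_zero_of_weighted (hp : 1 ≤ p) (hγ : 0 ≤ γ) (hq : 1 < (γ + 1) / p)
    (hf : ∀ x ∈ Ioi 0, HasDerivAt f (f' x) x)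
    (hfw : IntegrableOn (fun x => |f x| ^ p * x ^ γ) (Ioi 0))
    (hf'w : IntegrableOn (fun x => |f' x| ^ p * x ^ γ) (Ioi 0)) :
    Tendsto f atTop (𝓝 0) := by
  set q := (γ + 1) / p
  have h1q : Tendsto (fun x : ℝ => x ^ (1 - q)) atTop (𝓝 0) := by
    simpa only [neg_sub] using tendsto_rpow_neg_atTop (by linarith : 0 < q - 1)
  have hdecay : Tendsto (fun x : ℝ => x ^ (-q) * weightedLpNorm p γ f +
      x ^ (1 - q) * weightedLpNorm p γ f') atTop (𝓝 0) := by
    simpa using ((tendsto_rpow_neg_atTop (by linarith : 0 < q)).mul_const _).add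
      (h1q.mul_const _)
  refine squeeze_zero_norm' ?_ hdecay
  filter_upwards [eventually_gt_atTop 0] with x hx
  exact abs_le_weightedLpNorm_of_hasDerivAt hp hγ hf hfw hf'w hx ⟨le_rfl, by linarith⟩

lemma exists_continuousOn_Ici_of_weighted (hp : 1 ≤ p) (hγ : 0 ≤ γ)
    (hq₁ : 1 < (γ + 1) / p) (hq₂ : (γ + 1) / p < 2)
    (hf : ∀ x ∈ Ioi 0, HasDerivAt f (f' x) x) (hf' : ∀ x ∈ Ioi 0, HasDerivAt f' (f'' x) x)
    (hfw : IntegrableOn (fun x => |f x| ^ p * x ^ γ) (Ioi 0))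
    (hf'w : IntegrableOn (fun x => |f' x| ^ p * x ^ γ) (Ioi 0))
    (hf''w : IntegrableOn (fun x => |f'' x| ^ p * x ^ γ) (Ioi 0)) :
    ∃ v : ℝ → ℝ, ContinuousOn v (Ici 0) ∧ (∀ x ∈ Ioi 0, v x = f x) ∧
      ∀ x ∈ Icc (0:ℝ) 1, |v x| ≤ weightedLpNorm p γ f + 2 * weightedLpNorm p γ f' +
        weightedLpNorm p γ f'' +
        weightedLpNorm p γ f'' / ((1 - 2 ^ (1 - (γ + 1) / p)) * (2 - (γ + 1) / p)) := by
  have hf'm : AEStronglyMeasurable f' (volume.restrict (Ioc 0 1)) :=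
    ContinuousOn.aestronglyMeasurable
      (fun y (hy : y ∈ Ioc 0 1) => (hf' y hy.1).continuousAt.continuousWithinAt) measurableSet_Ioc
  obtain ⟨hf'i, hf'L1⟩ := intervalIntegrable_of_abs_le_rpow
    (by linarith : -1 < 1 - (γ + 1) / p) hf'm
    fun x hx => abs_le_weightedLpNorm_of_mem_Ioc hp hγ hq₁ hf' hf'w hf''w hx
  obtain ⟨v, hvc, hvf, hv⟩ := exists_continuousOn_Ici_eq_of_hasDerivAt hf hf'i
  refine ⟨v, hvc, hvf, fun x hx => (hv x hx).trans ?_⟩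
  rw [div_div, show 1 - (γ + 1) / p + 1 = 2 - (γ + 1) / p by ring] at hf'L1
  linarith [abs_le_weightedLpNorm_of_one_le hp hγ hq₁.le hf hfw hf'w le_rfl]

end Weighted

theorem stmt_3 (p γ : ℝ) (hp : 1 ≤ p) (h1 : p - 1 < γ) (h2 : γ < 2 * p - 1) :
    ∃ C : ℝ, 0 < C ∧ ∀ u u' u'' : ℝ → ℝ,
      (∀ x ∈ Ioi (0:ℝ), HasDerivAt u (u' x) x) →
      (∀ x ∈ Ioi (0:ℝ), HasDerivAt u' (u'' x) x) →
      IntegrableOn (fun x => |u x| ^ p * x ^ γ) (Ioi 0) →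
      IntegrableOn (fun x => |u' x| ^ p * x ^ γ) (Ioi 0) →
      IntegrableOn (fun x => |u'' x| ^ p * x ^ γ) (Ioi 0) →
      ∃ v : ℝ → ℝ, ContinuousOn v (Ici 0) ∧ (∀ x ∈ Ioi (0:ℝ), v x = u x) ∧
        Filter.Tendsto v Filter.atTop (nhds 0) ∧
        ∀ x ∈ Ici (0:ℝ), |v x| ≤ C *
          ((∫ x in Ioi (0:ℝ), |u x| ^ p * x ^ γ) ^ (1 / p) +
           (∫ x in Ioi (0:ℝ), |u' x| ^ p * x ^ γ) ^ (1 / p) +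
           (∫ x in Ioi (0:ℝ), |u'' x| ^ p * x ^ γ) ^ (1 / p)) := by
  have hp0 : 0 < p := by linarith
  have hγ : 0 ≤ γ := by linarith
  have hq₁ : 1 < (γ + 1) / p := (one_lt_div hp0).2 (by linarith)
  have hq₂ : (γ + 1) / p < 2 := (div_lt_iff₀ hp0).2 (by linarith)
  set c := 1 / ((1 - (2:ℝ) ^ (1 - (γ + 1) / p)) * (2 - (γ + 1) / p))
  have hc : 0 < c := one_div_pos.2 (mul_pos (sub_pos.2 (Real.rpow_lt_one_of_one_lt_of_neg
    one_lt_two (by linarith))) (by linarith))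
  refine ⟨2 + c, by positivity, fun u u' u'' hu hu' hi0 hi1 hi2 => ?_⟩
  obtain ⟨v, hvc, hvu, hv01⟩ :=
    exists_continuousOn_Ici_of_weighted hp hγ hq₁ hq₂ hu hu' hi0 hi1 hi2
  have hlim := tendsto_atTop_zero_of_weighted hp hγ hq₁ hu hi0 hi1
  refine ⟨v, hvc, hvu, hlim.congr' (eventually_gt_atTop 0 |>.mono fun x hx => (hvu x hx).symm),
    fun x (hx : 0 ≤ x) => ?_⟩
  show |v x| ≤ (2 + c) * (weightedLpNorm p γ u + weightedLpNorm p γ u' + weightedLpNorm p γ u'')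
  have hN₀ : 0 ≤ weightedLpNorm p γ u := weightedLpNorm_nonneg
  have hN₁ : 0 ≤ weightedLpNorm p γ u' := weightedLpNorm_nonneg
  have hN₂ : 0 ≤ weightedLpNorm p γ u'' := weightedLpNorm_nonneg
  rcases le_or_gt x 1 with hx1 | hx1
  · have hv := hv01 x ⟨hx, hx1⟩
    rw [← mul_one_div] at hv
    nlinarith
  · rw [hvu x (zero_lt_one.trans hx1)]
    nlinarith [abs_le_weightedLpNorm_of_one_le hp hγ hq₁.le hu hi0 hi1 hx1.le]
end

section
/- Let p ∈ (1,∞) and γ ∈ (p−1, 2p−1), and define k(x,y) = y (x/y)^{(γ+1)/p} e^{−|x−y|²} min{1, 4xy} for x, y > 0. Then sup_{x>0} ∫_0^∞ k(x,y) dy/y < ∞ and sup_{y>0} ∫_0^∞ k(x,y) dx/x < ∞. -/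
open MeasureTheory Set Real

open MeasureTheory Set Real

lemma gauss_lint (b : ℝ) (hb : 0 < b) (c : ℝ) :
    ∫⁻ y : ℝ, ENNReal.ofReal (Real.exp (-(b * (y - c)^2))) = ENNReal.ofReal (Real.sqrt (π / b)) := by
  have hint : Integrable (fun y : ℝ => Real.exp (-(b * (y - c)^2))) := by
    have := (integrable_exp_neg_mul_sq hb).comp_sub_right c
    simpa [neg_mul] using this
  rw [← ofReal_integral_eq_lintegral_ofReal hint
    (Filter.Eventually.of_forall fun y => (Real.exp_pos _).le)]
  congr 1
  have h2 : ∫ y : ℝ, Real.exp (-(b * (y - c)^2)) = ∫ y : ℝ, Real.exp (-(b * y^2)) :=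
    integral_sub_right_eq_self (fun z => Real.exp (-(b * z^2))) c
  rw [h2]
  simpa [neg_mul] using integral_gaussian b

lemma rpow_lint {r : ℝ} (hr : -1 < r) {b : ℝ} (hb : 0 < b) :
    ∫⁻ y in Ioc (0:ℝ) b, ENNReal.ofReal (y ^ r) = ENNReal.ofReal (b ^ (r+1) / (r+1)) := by
  have hint : IntegrableOn (fun y : ℝ => y ^ r) (Ioc 0 b) :=
    (intervalIntegral.intervalIntegrable_rpow' (a := 0) (b := b) hr).1
  rw [← ofReal_integral_eq_lintegral_ofReal hint]
  · congr 1
    have := integral_rpow (a := 0) (b := b) (Or.inl hr)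
    rw [intervalIntegral.integral_of_le hb.le] at this
    rw [this, Real.zero_rpow (by linarith)]
    ring
  · filter_upwards [ae_restrict_mem measurableSet_Ioc] with y hy
    exact Real.rpow_nonneg hy.1.le r


lemma cube_bound (x : ℝ) (hx : 0 ≤ x) : x^3 * Real.exp (-(x^2/4)) ≤ 65 := by
  have hE : x^2/8 ≤ Real.exp (x^2/8) := by
    have := Real.add_one_le_exp (x^2/8); linarith
  have hE2 : x^4/64 ≤ Real.exp (x^2/4) := by
    have h1 : (x^2/8)^2 ≤ Real.exp (x^2/8)^2 := by
      have := sq_nonneg x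
      exact pow_le_pow_left₀ (by positivity) hE 2
    have h2 : Real.exp (x^2/8)^2 = Real.exp (x^2/4) := by
      rw [← Real.exp_nat_mul]; ring_nf
    nlinarith
  have h1 : (1:ℝ) ≤ Real.exp (x^2/4) := Real.one_le_exp (by positivity)
  have hx3 : x^3 ≤ 1 + x^4 := by nlinarith [sq_nonneg (x^2 - x), sq_nonneg (x-1), sq_nonneg x]
  rw [Real.exp_neg]
  rw [mul_inv_le_iff₀ (Real.exp_pos _)]
  nlinarith

lemma sq_exp_bound (x : ℝ) : x^2 * Real.exp (-(x^2/8)) ≤ 8 := by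
  have hE : x^2/8 ≤ Real.exp (x^2/8) := by
    have := Real.add_one_le_exp (x^2/8); linarith
  rw [Real.exp_neg, mul_inv_le_iff₀ (Real.exp_pos _)]
  nlinarith [Real.exp_pos (x^2/8)]

theorem stmt_6 (p γ : ℝ) (hp : 1 < p) (h1 : p - 1 < γ) (h2 : γ < 2 * p - 1) :
    (∃ A : ℝ, ∀ x ∈ Ioi (0:ℝ),
      (∫⁻ y in Ioi (0:ℝ), ENNReal.ofReal
        (y * (x / y) ^ ((γ + 1) / p) * Real.exp (-(x - y) ^ 2) * min 1 (4 * x * y) / y))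
        ≤ ENNReal.ofReal A) ∧
    (∃ B : ℝ, ∀ y ∈ Ioi (0:ℝ),
      (∫⁻ x in Ioi (0:ℝ), ENNReal.ofReal
        (y * (x / y) ^ ((γ + 1) / p) * Real.exp (-(x - y) ^ 2) * min 1 (4 * x * y) / x))
        ≤ ENNReal.ofReal B) := by
  constructor
  · have hp0 : (0:ℝ) < p := by linarith
    set α := (γ + 1) / p with hαdef
    have hα1 : 1 < α := (one_lt_div hp0).mpr (by linarith)
    have hα2 : α < 2 := (div_lt_iff₀ hp0).mpr (by linarith)
    have h2α : (0:ℝ) < 2 - α := by linarith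
    refine ⟨260/(2-α) + 4 * Real.sqrt π, fun x hx => ?_⟩
    have hx : (0:ℝ) < x := hx
    have hsplit : Ioi (0:ℝ) = Ioc 0 (x/2) ∪ Ioi (x/2) :=
      (Ioc_union_Ioi_eq_Ioi (by positivity)).symm
    have piece1 : (∫⁻ y in Ioc (0:ℝ) (x/2), ENNReal.ofReal
          (y * (x / y) ^ α * Real.exp (-(x - y) ^ 2) * min 1 (4 * x * y) / y))
          ≤ ENNReal.ofReal (260/(2-α)) := by
      set c : ℝ := 4 * x^(α+1) * Real.exp (-(x^2/4)) with hc
      have hc0 : 0 ≤ c := by positivity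
      have step1 : (∫⁻ y in Ioc (0:ℝ) (x/2), ENNReal.ofReal
          (y * (x / y) ^ α * Real.exp (-(x - y) ^ 2) * min 1 (4 * x * y) / y))
          ≤ ∫⁻ y in Ioc (0:ℝ) (x/2), ENNReal.ofReal (c * y ^ (1-α)) := by
        apply setLIntegral_mono' measurableSet_Ioc
        intro y hy
        apply ENNReal.ofReal_le_ofReal
        obtain ⟨hy0, hy2⟩ := hy
        have hyne : y ≠ 0 := hy0.ne'
        have hyα : (0:ℝ) < y ^ α := Real.rpow_pos_of_pos hy0 α
        have lhs_eq : y * (x / y) ^ α * Real.exp (-(x - y) ^ 2) * min 1 (4 * x * y) / y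
            = (x / y) ^ α * Real.exp (-(x - y) ^ 2) * min 1 (4 * x * y) := by
          field_simp
          all_goals ring
        have hE : Real.exp (-(x - y) ^ 2) ≤ Real.exp (-(x^2/4)) := by
          apply Real.exp_le_exp.mpr
          nlinarith [mul_nonneg (by linarith : (0:ℝ) ≤ x/2 - y) (by linarith : (0:ℝ) ≤ 3*x/2 - y)]
        have hm : min 1 (4 * x * y) ≤ 4 * x * y := min_le_right _ _
        have hm0 : 0 ≤ min 1 (4 * x * y) := le_min zero_le_one (by positivity)
        have hrhs : c * y ^ (1-α) = (x/y) ^ α * Real.exp (-(x^2/4)) * (4 * x * y) := by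
          rw [hc, Real.div_rpow hx.le hy0.le, Real.rpow_add_one hx.ne',
            show (1:ℝ) - α = 1 - α from rfl, Real.rpow_sub hy0, Real.rpow_one]
          field_simp
          all_goals ring
        rw [lhs_eq, hrhs]
        gcongr
      refine step1.trans ?_
      have step2 : (∫⁻ y in Ioc (0:ℝ) (x/2), ENNReal.ofReal (c * y ^ (1-α)))
          = ENNReal.ofReal (c * ((x/2)^(2-α)/(2-α))) := by
        simp_rw [ENNReal.ofReal_mul hc0]
        rw [lintegral_const_mul' _ _ ENNReal.ofReal_ne_top]
        have h := rpow_lint (r := 1 - α) (by linarith) (b := x/2) (by positivity)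
        rw [show (1:ℝ) - α + 1 = 2 - α by ring] at h
        rw [h, ← ENNReal.ofReal_mul hc0]
      rw [step2]
      apply ENNReal.ofReal_le_ofReal
      have key : x^(α+1) * (x/2)^(2-α) ≤ x^3 := by
        have h1 : (x/2)^(2-α) ≤ x^(2-α) :=
          Real.rpow_le_rpow (by positivity) (by linarith) (by linarith)
        have h2 : x^(α+1) * x^(2-α) = x^3 := by
          rw [← Real.rpow_add hx, show α + 1 + (2 - α) = (3:ℝ) by ring,
            show (3:ℝ) = ((3:ℕ):ℝ) by norm_num, Real.rpow_natCast]
        calc x^(α+1) * (x/2)^(2-α) ≤ x^(α+1) * x^(2-α) := by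
              gcongr
          _ = x^3 := h2
      have e_pos : (0:ℝ) < Real.exp (-(x^2/4)) := Real.exp_pos _
      calc c * ((x/2)^(2-α)/(2-α))
          = (4/(2-α)) * ((x^(α+1) * (x/2)^(2-α)) * Real.exp (-(x^2/4))) := by rw [hc]; ring
        _ ≤ (4/(2-α)) * (x^3 * Real.exp (-(x^2/4))) := by
            apply mul_le_mul_of_nonneg_left _ (le_of_lt (by positivity))
            exact mul_le_mul_of_nonneg_right key e_pos.le
        _ ≤ (4/(2-α)) * 65 := mul_le_mul_of_nonneg_left (cube_bound x hx.le) (le_of_lt (by positivity))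
        _ = 260/(2-α) := by ring
    have piece2 : (∫⁻ y in Ioi (x/2), ENNReal.ofReal
          (y * (x / y) ^ α * Real.exp (-(x - y) ^ 2) * min 1 (4 * x * y) / y))
          ≤ ENNReal.ofReal (4 * Real.sqrt π) := by
      have step1 : (∫⁻ y in Ioi (x/2), ENNReal.ofReal
          (y * (x / y) ^ α * Real.exp (-(x - y) ^ 2) * min 1 (4 * x * y) / y))
          ≤ ∫⁻ y in Ioi (x/2), ENNReal.ofReal (4 * Real.exp (-(x - y) ^ 2)) := by
        apply setLIntegral_mono' measurableSet_Ioi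
        intro y hy
        apply ENNReal.ofReal_le_ofReal
        have hy0 : (0:ℝ) < y := lt_of_le_of_lt (by positivity) hy
        have lhs_eq : y * (x / y) ^ α * Real.exp (-(x - y) ^ 2) * min 1 (4 * x * y) / y
            = (x / y) ^ α * Real.exp (-(x - y) ^ 2) * min 1 (4 * x * y) := by
          field_simp
          all_goals ring
        have h4 : (x/y) ^ α ≤ 4 := by
          have hd : x / y ≤ 2 := by rw [div_le_iff₀ hy0]; linarith [show x/2 < y from hy]
          calc (x/y)^α ≤ 2^α := Real.rpow_le_rpow (by positivity) hd (by linarith)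
            _ ≤ 2^(2:ℝ) := Real.rpow_le_rpow_of_exponent_le one_le_two hα2.le
            _ = 4 := by
              rw [show (2:ℝ) = ((2:ℕ):ℝ) by norm_num, Real.rpow_natCast]; norm_num
        have hm : min 1 (4 * x * y) ≤ 1 := min_le_left _ _
        have hm0 : 0 ≤ min 1 (4 * x * y) := le_min zero_le_one (by positivity)
        rw [lhs_eq]
        calc (x / y) ^ α * Real.exp (-(x - y) ^ 2) * min 1 (4 * x * y)
            ≤ 4 * Real.exp (-(x - y) ^ 2) * 1 := by
              gcongr
          _ = 4 * Real.exp (-(x - y) ^ 2) := by ring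
      refine step1.trans ?_
      calc (∫⁻ y in Ioi (x/2), ENNReal.ofReal (4 * Real.exp (-(x - y) ^ 2)))
          ≤ ∫⁻ y : ℝ, ENNReal.ofReal (4 * Real.exp (-(x - y) ^ 2)) :=
            setLIntegral_le_lintegral _ _
        _ = ENNReal.ofReal 4 * ∫⁻ y : ℝ, ENNReal.ofReal (Real.exp (-(1 * (y - x) ^ 2))) := by
            simp_rw [ENNReal.ofReal_mul (by norm_num : (0:ℝ) ≤ 4),
              show ∀ y : ℝ, -(x - y)^2 = -(1 * (y - x)^2) from fun y => by ring]
            rw [lintegral_const_mul' _ _ ENNReal.ofReal_ne_top]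
        _ = ENNReal.ofReal 4 * ENNReal.ofReal (Real.sqrt (π / 1)) := by
            rw [gauss_lint 1 one_pos x]
        _ = ENNReal.ofReal (4 * Real.sqrt π) := by
            rw [← ENNReal.ofReal_mul (by norm_num), div_one]
    calc (∫⁻ y in Ioi (0:ℝ), ENNReal.ofReal
          (y * (x / y) ^ α * Real.exp (-(x - y) ^ 2) * min 1 (4 * x * y) / y))
        ≤ (∫⁻ y in Ioc (0:ℝ) (x/2), ENNReal.ofReal
          (y * (x / y) ^ α * Real.exp (-(x - y) ^ 2) * min 1 (4 * x * y) / y))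
          + ∫⁻ y in Ioi (x/2), ENNReal.ofReal
          (y * (x / y) ^ α * Real.exp (-(x - y) ^ 2) * min 1 (4 * x * y) / y) := by
          rw [hsplit]; exact lintegral_union_le _ _ _
      _ ≤ ENNReal.ofReal (260/(2-α)) + ENNReal.ofReal (4 * Real.sqrt π) :=
          add_le_add piece1 piece2
      _ = ENNReal.ofReal (260/(2-α) + 4 * Real.sqrt π) :=
          (ENNReal.ofReal_add (by positivity) (by positivity)).symm
  · have hp0 : (0:ℝ) < p := by linarith
    set α := (γ + 1) / p with hαdef
    have hα1 : 1 < α := (one_lt_div hp0).mpr (by linarith)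
    have hα2 : α < 2 := (div_lt_iff₀ hp0).mpr (by linarith)
    refine ⟨2 * Real.sqrt π + 32 * Real.sqrt (8*π), fun y hy => ?_⟩
    have hy : (0:ℝ) < y := hy
    have hsplit : Ioi (0:ℝ) = Ioc 0 (2*y) ∪ Ioi (2*y) :=
      (Ioc_union_Ioi_eq_Ioi (by positivity)).symm
    have piece1 : (∫⁻ x in Ioc (0:ℝ) (2*y), ENNReal.ofReal
          (y * (x / y) ^ α * Real.exp (-(x - y) ^ 2) * min 1 (4 * x * y) / x))
          ≤ ENNReal.ofReal (2 * Real.sqrt π) := by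
      have step1 : (∫⁻ x in Ioc (0:ℝ) (2*y), ENNReal.ofReal
          (y * (x / y) ^ α * Real.exp (-(x - y) ^ 2) * min 1 (4 * x * y) / x))
          ≤ ∫⁻ x in Ioc (0:ℝ) (2*y), ENNReal.ofReal (2 * Real.exp (-(x - y) ^ 2)) := by
        apply setLIntegral_mono' measurableSet_Ioc
        intro x hx
        apply ENNReal.ofReal_le_ofReal
        obtain ⟨hx0, hx2⟩ := hx
        have hxyne : x / y ≠ 0 := (div_pos hx0 hy).ne'
        have hsplitα : (x/y)^α = (x/y)^(α-1) * (x/y) := by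
          conv_lhs => rw [show α = (α-1)+1 by ring, Real.rpow_add_one hxyne]
        have lhs_eq : y * (x/y)^α * Real.exp (-(x - y) ^ 2) * min 1 (4 * x * y) / x
            = (x/y)^(α-1) * Real.exp (-(x - y) ^ 2) * min 1 (4 * x * y) := by
          rw [hsplitα]
          field_simp
          all_goals ring
        have hpow : (x/y)^(α-1) ≤ 2 := by
          have hd : x/y ≤ 2 := by rw [div_le_iff₀ hy]; linarith
          calc (x/y)^(α-1) ≤ 2^(α-1) := Real.rpow_le_rpow (by positivity) hd (by linarith)
            _ ≤ 2^(1:ℝ) := Real.rpow_le_rpow_of_exponent_le one_le_two (by linarith)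
            _ = 2 := Real.rpow_one 2
        have hm : min 1 (4 * x * y) ≤ 1 := min_le_left _ _
        have hm0 : 0 ≤ min 1 (4 * x * y) := le_min zero_le_one (by positivity)
        rw [lhs_eq]
        calc (x/y)^(α-1) * Real.exp (-(x - y) ^ 2) * min 1 (4 * x * y)
            ≤ 2 * Real.exp (-(x - y) ^ 2) * 1 := by gcongr
          _ = 2 * Real.exp (-(x - y) ^ 2) := by ring
      refine step1.trans ?_
      calc (∫⁻ x in Ioc (0:ℝ) (2*y), ENNReal.ofReal (2 * Real.exp (-(x - y) ^ 2)))
          ≤ ∫⁻ x : ℝ, ENNReal.ofReal (2 * Real.exp (-(x - y) ^ 2)) :=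
            setLIntegral_le_lintegral _ _
        _ = ENNReal.ofReal 2 * ∫⁻ x : ℝ, ENNReal.ofReal (Real.exp (-(1 * (x - y) ^ 2))) := by
            simp_rw [ENNReal.ofReal_mul (by norm_num : (0:ℝ) ≤ 2),
              show ∀ x : ℝ, -(x - y)^2 = -(1 * (x - y)^2) from fun x => by ring]
            rw [lintegral_const_mul' _ _ ENNReal.ofReal_ne_top]
        _ = ENNReal.ofReal 2 * ENNReal.ofReal (Real.sqrt (π / 1)) := by
            rw [gauss_lint 1 one_pos y]
        _ = ENNReal.ofReal (2 * Real.sqrt π) := by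
            rw [← ENNReal.ofReal_mul (by norm_num), div_one]
    have piece2 : (∫⁻ x in Ioi (2*y), ENNReal.ofReal
          (y * (x / y) ^ α * Real.exp (-(x - y) ^ 2) * min 1 (4 * x * y) / x))
          ≤ ENNReal.ofReal (32 * Real.sqrt (8*π)) := by
      have step1 : (∫⁻ x in Ioi (2*y), ENNReal.ofReal
          (y * (x / y) ^ α * Real.exp (-(x - y) ^ 2) * min 1 (4 * x * y) / x))
          ≤ ∫⁻ x in Ioi (2*y), ENNReal.ofReal (32 * Real.exp (-(x^2/8))) := by
        apply setLIntegral_mono' measurableSet_Ioi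
        intro x hx
        apply ENNReal.ofReal_le_ofReal
        have hx' : 2*y < x := hx
        have hx0 : (0:ℝ) < x := by linarith
        have hxα : (0:ℝ) ≤ x ^ α := Real.rpow_nonneg hx0.le α
        have hEb : Real.exp (-(x - y) ^ 2) ≤ Real.exp (-(x^2/4)) := by
          apply Real.exp_le_exp.mpr
          nlinarith [mul_nonneg (by linarith : (0:ℝ) ≤ x/2 - y) (by linarith : (0:ℝ) ≤ 3*x/2 - y)]
        have hm : min 1 (4 * x * y) ≤ 4 * x * y := min_le_right _ _
        have hm0 : 0 ≤ min 1 (4 * x * y) := le_min zero_le_one (by positivity)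
        have A0 : 0 ≤ y * (x^α / y^α) :=
          mul_nonneg hy.le (div_nonneg hxα (Real.rpow_nonneg hy.le α))
        have key_eq : y * (x^α / y^α) * Real.exp (-(x^2/4)) * (4*x*y) / x
            = 4 * (x^α * y^(2-α)) * Real.exp (-(x^2/4)) := by
          rw [show y^((2:ℝ)-α) = y^(2:ℝ)/y^α from Real.rpow_sub hy 2 α,
            show y^(2:ℝ) = y^(2:ℕ) from by rw [← Real.rpow_natCast y 2]; norm_num]
          have hyα : (0:ℝ) < y ^ α := Real.rpow_pos_of_pos hy α
          field_simp
          all_goals ring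
        have h2' : y^(2-α) ≤ x^(2-α) := Real.rpow_le_rpow hy.le (by linarith) (by linarith)
        have hxx : x^α * x^((2:ℝ)-α) = x^2 := by
          rw [← Real.rpow_add hx0, show α + (2 - α) = (2:ℝ) by ring,
            show (2:ℝ) = ((2:ℕ):ℝ) by norm_num, Real.rpow_natCast]
        have final : 4*x^2*Real.exp (-(x^2/4)) ≤ 32*Real.exp (-(x^2/8)) := by
          have h8 := sq_exp_bound x
          have hxp : Real.exp (-(x^2/4)) = Real.exp (-(x^2/8)) * Real.exp (-(x^2/8)) := by
            rw [← Real.exp_add]; ring_nf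
          nlinarith [Real.exp_pos (-(x^2/8)), Real.exp_pos (-(x^2/4))]
        calc y * (x/y)^α * Real.exp (-(x - y) ^ 2) * min 1 (4 * x * y) / x
            = y * (x^α/y^α) * Real.exp (-(x - y) ^ 2) * min 1 (4 * x * y) / x := by
              rw [Real.div_rpow hx0.le hy.le]
          _ ≤ y * (x^α/y^α) * Real.exp (-(x^2/4)) * (4*x*y) / x := by
              apply div_le_div_of_nonneg_right ?_ hx0.le
              exact mul_le_mul (mul_le_mul_of_nonneg_left hEb A0) hm hm0
                (mul_nonneg A0 (Real.exp_pos _).le)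
          _ = 4 * (x^α * y^(2-α)) * Real.exp (-(x^2/4)) := key_eq
          _ ≤ 4 * (x^α * x^(2-α)) * Real.exp (-(x^2/4)) := by
              have hmm : x^α * y^(2-α) ≤ x^α * x^(2-α) := mul_le_mul_of_nonneg_left h2' hxα
              nlinarith [Real.exp_pos (-(x^2/4))]
          _ = 4 * x^2 * Real.exp (-(x^2/4)) := by rw [hxx]
          _ ≤ 32 * Real.exp (-(x^2/8)) := final
      refine step1.trans ?_
      calc (∫⁻ x in Ioi (2*y), ENNReal.ofReal (32 * Real.exp (-(x^2/8))))
          ≤ ∫⁻ x : ℝ, ENNReal.ofReal (32 * Real.exp (-(x^2/8))) :=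
            setLIntegral_le_lintegral _ _
        _ = ENNReal.ofReal 32 * ∫⁻ x : ℝ, ENNReal.ofReal (Real.exp (-(1/8 * (x - 0) ^ 2))) := by
            simp_rw [ENNReal.ofReal_mul (by norm_num : (0:ℝ) ≤ 32),
              show ∀ x : ℝ, -(x^2/8) = -(1/8 * (x - 0)^2) from fun x => by ring]
            rw [lintegral_const_mul' _ _ ENNReal.ofReal_ne_top]
        _ = ENNReal.ofReal 32 * ENNReal.ofReal (Real.sqrt (π / (1/8))) := by
            rw [gauss_lint (1/8) (by norm_num) 0]
        _ = ENNReal.ofReal (32 * Real.sqrt (8*π)) := by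
            rw [← ENNReal.ofReal_mul (by norm_num), show π / (1/8) = 8*π by ring]
    calc (∫⁻ x in Ioi (0:ℝ), ENNReal.ofReal
          (y * (x / y) ^ α * Real.exp (-(x - y) ^ 2) * min 1 (4 * x * y) / x))
        ≤ (∫⁻ x in Ioc (0:ℝ) (2*y), ENNReal.ofReal
          (y * (x / y) ^ α * Real.exp (-(x - y) ^ 2) * min 1 (4 * x * y) / x))
          + ∫⁻ x in Ioi (2*y), ENNReal.ofReal
          (y * (x / y) ^ α * Real.exp (-(x - y) ^ 2) * min 1 (4 * x * y) / x) := by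
          rw [hsplit]; exact lintegral_union_le _ _ _
      _ ≤ ENNReal.ofReal (2 * Real.sqrt π) + ENNReal.ofReal (32 * Real.sqrt (8*π)) :=
          add_le_add piece1 piece2
      _ = ENNReal.ofReal (2 * Real.sqrt π + 32 * Real.sqrt (8*π)) :=
          (ENNReal.ofReal_add (by positivity) (by positivity)).symm
end

section
/- Let p ∈ (1,∞), α ∈ ℝ, and let μ be the measure on (0,∞) given by dμ(x) = x dx. Then the weight w_α(x) = x^α belongs to the Muckenhoupt class A_p(μ) if and only if α ∈ (−2, 2p−2). -/
open MeasureTheory Set Filter Topology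

/-!
For `σ > -2` the average of `x ^ σ` over `(a, b)` against `x dx` is explicit and, by a
Bernoulli-type inequality, at most `C_σ b ^ σ`. With `β = -α / (p - 1)` the powers of `b` cancel
in the `A_p` product, which is therefore bounded when `α, β > -2`, i.e. when `-2 < α < 2p - 2`.
Conversely, if `α ≤ -2` or `β ≤ -2`, the average of that power over `(a, 1)` is at least `-log a`,
while the average of the other power tends to a positive limit as `a → 0`.
-/

lemma one_sub_rpow_le_mul_one_sub_sq {t s : ℝ} (ht0 : 0 ≤ t) (ht1 : t ≤ 1) (hs : 0 < s) :
    1 - t ^ s ≤ max 1 s * (1 - t ^ 2) := by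
  have hsq : t ^ 2 ≤ 1 := pow_le_one₀ ht0 ht1
  rcases le_or_gt s 2 with hs2 | hs2
  · have : t ^ (2 : ℝ) ≤ t ^ s := Real.rpow_le_rpow_of_exponent_ge' ht0 ht1 hs.le hs2
    rw [Real.rpow_two] at this
    nlinarith [le_max_left 1 s]
  · have bernoulli : 1 + s * (t - 1) ≤ t ^ s := by
      simpa using one_add_mul_self_le_rpow_one_add (s := t - 1) (by linarith) (p := s) (by linarith)
    have : t ^ 2 ≤ t := by nlinarith
    rw [max_eq_right (by linarith)]
    nlinarith [mul_le_mul_of_nonneg_left this hs.le]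

lemma rpow_sub_rpow_le {a b s : ℝ} (ha : 0 ≤ a) (hab : a < b) (hs : 0 < s) :
    b ^ s - a ^ s ≤ max 1 s * b ^ (s - 2) * (b ^ 2 - a ^ 2) := by
  have hb : 0 < b := ha.trans_lt hab
  have ht := one_sub_rpow_le_mul_one_sub_sq (div_nonneg ha hb.le) ((div_le_one hb).2 hab.le) hs
  have hbs : b ^ s = b ^ (s - 2) * b ^ 2 := by
    rw [← Real.rpow_natCast, ← Real.rpow_add hb]
    norm_num
  calc b ^ s - a ^ s = b ^ s * (1 - (a / b) ^ s) := by
        rw [Real.div_rpow ha hb.le, mul_sub, mul_div_cancel₀ _ (Real.rpow_pos_of_pos hb s).ne']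
        ring
    _ ≤ b ^ s * (max 1 s * (1 - (a / b) ^ 2)) := by gcongr
    _ = max 1 s * b ^ (s - 2) * (b ^ 2 - a ^ 2) := by
        rw [hbs]
        field_simp

lemma integral_Ioo_id {a b : ℝ} (hab : a ≤ b) : ∫ x in Ioo a b, x = (b ^ 2 - a ^ 2) / 2 := by
  rw [← integral_Ioc_eq_integral_Ioo, ← intervalIntegral.integral_of_le hab, integral_id]

lemma integral_Ioo_rpow_mul_self {a b σ : ℝ} (ha : 0 ≤ a) (hab : a ≤ b) (hσ : -2 < σ) :
    ∫ x in Ioo a b, x ^ σ * x = (b ^ (σ + 2) - a ^ (σ + 2)) / (σ + 2) := by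
  rw [setIntegral_congr_fun measurableSet_Ioo
      (fun x hx => (Real.rpow_add_one (ha.trans_lt hx.1).ne' σ).symm),
    ← integral_Ioc_eq_integral_Ioo, ← intervalIntegral.integral_of_le hab,
    integral_rpow (Or.inl (by linarith))]
  ring_nf

noncomputable def powerAverage (σ a b : ℝ) : ℝ :=
  (∫ x in Ioo a b, x)⁻¹ * ∫ x in Ioo a b, x ^ σ * x

lemma powerAverage_nonneg {σ a b : ℝ} (ha : 0 ≤ a) : 0 ≤ powerAverage σ a b := by
  have hpos : ∀ x ∈ Ioo a b, 0 < x := fun x hx => ha.trans_lt hx.1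
  unfold powerAverage
  refine mul_nonneg (inv_nonneg.2 ?_) ?_ <;>
    refine setIntegral_nonneg measurableSet_Ioo fun x hx => ?_
  · exact (hpos x hx).le
  · have := hpos x hx
    positivity

lemma powerAverage_eq {σ a b : ℝ} (ha : 0 ≤ a) (hab : a ≤ b) (hσ : -2 < σ) :
    powerAverage σ a b = ((b ^ 2 - a ^ 2) / 2)⁻¹ * ((b ^ (σ + 2) - a ^ (σ + 2)) / (σ + 2)) := by
  rw [powerAverage, integral_Ioo_id hab, integral_Ioo_rpow_mul_self ha hab hσ]

lemma powerAverage_le {σ a b : ℝ} (ha : 0 ≤ a) (hab : a < b) (hσ : -2 < σ) :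
    powerAverage σ a b ≤ 2 * max 1 (σ + 2) / (σ + 2) * b ^ σ := by
  have hσ2 : 0 < σ + 2 := by linarith
  have hsq : 0 < b ^ 2 - a ^ 2 := by nlinarith
  rw [powerAverage_eq ha hab.le hσ]
  calc ((b ^ 2 - a ^ 2) / 2)⁻¹ * ((b ^ (σ + 2) - a ^ (σ + 2)) / (σ + 2))
      ≤ ((b ^ 2 - a ^ 2) / 2)⁻¹ *
          (max 1 (σ + 2) * b ^ (σ + 2 - 2) * (b ^ 2 - a ^ 2) / (σ + 2)) := by
        gcongr
        exact rpow_sub_rpow_le ha hab hσ2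
    _ = 2 * max 1 (σ + 2) / (σ + 2) * b ^ σ := by
        rw [add_sub_cancel_right]
        field_simp

/-- The quantity whose supremum over intervals is the `A_p(x dx)` constant of `x ^ α`. -/
noncomputable def apProduct (p α a b : ℝ) : ℝ :=
  powerAverage α a b * powerAverage (-α / (p - 1)) a b ^ (p - 1)

lemma exists_apProduct_le {p α : ℝ} (hp : 1 < p) (h₁ : -2 < α) (h₂ : α < 2 * p - 2) :
    ∃ A, ∀ a b : ℝ, 0 ≤ a → a < b → apProduct p α a b ≤ A := by
  set β := -α / (p - 1)
  have hp1 : 0 < p - 1 := by linarith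
  have hβ : -2 < β := by
    rw [lt_div_iff₀ hp1]
    linarith
  have hβα : β * (p - 1) = -α := div_mul_cancel₀ _ hp1.ne'
  set Cα := 2 * max 1 (α + 2) / (α + 2)
  set Cβ := 2 * max 1 (β + 2) / (β + 2)
  have hCα : 0 ≤ Cα := by
    have : 0 < α + 2 := by linarith
    positivity
  have hCβ : 0 ≤ Cβ := by
    have : 0 < β + 2 := by linarith
    positivity
  refine ⟨Cα * Cβ ^ (p - 1), fun a b ha hab => ?_⟩
  have hb : 0 < b := ha.trans_lt hab
  calc apProduct p α a b ≤ Cα * b ^ α * (Cβ * b ^ β) ^ (p - 1) := by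
        have hβavg := powerAverage_nonneg (σ := β) (b := b) ha
        refine mul_le_mul (powerAverage_le ha hab h₁) ?_ (by positivity) (by positivity)
        exact Real.rpow_le_rpow hβavg (powerAverage_le ha hab hβ) hp1.le
    _ = Cα * Cβ ^ (p - 1) := by
        rw [Real.mul_rpow hCβ (by positivity), ← Real.rpow_mul hb.le, hβα, Real.rpow_neg hb.le]
        field_simp

lemma tendsto_powerAverage_nhdsGT_zero {σ : ℝ} (hσ : -2 < σ) :
    Tendsto (fun a => powerAverage σ a 1) (𝓝[>] 0) (𝓝 (2 / (σ + 2))) := by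
  have hσ2 : 0 < σ + 2 := by linarith
  let g (a : ℝ) : ℝ := ((1 ^ 2 - a ^ 2) / 2)⁻¹ * ((1 ^ (σ + 2) - a ^ (σ + 2)) / (σ + 2))
  have hg : ContinuousAt g 0 :=
    (((continuousAt_const.sub (continuous_pow 2).continuousAt).div_const 2).inv₀ (by norm_num)).mul
      ((continuousAt_const.sub (Real.continuousAt_rpow_const 0 _ (Or.inr hσ2.le))).div_const _)
  have hg0 : g 0 = 2 / (σ + 2) := by norm_num [g, Real.zero_rpow hσ2.ne', div_eq_mul_inv]
  refine (tendsto_nhdsWithin_of_tendsto_nhds (hg0 ▸ hg.tendsto)).congr' ?_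
  filter_upwards [Ioo_mem_nhdsGT zero_lt_one] with a ha
  exact (powerAverage_eq ha.1.le ha.2.le hσ).symm

lemma neg_log_le_integral_Ioo_rpow_mul_self {σ a : ℝ} (hσ : σ ≤ -2) (ha₀ : 0 < a) (ha₁ : a < 1) :
    -Real.log a ≤ ∫ x in Ioo a 1, x ^ σ * x := by
  have hIcc : ∀ x ∈ Icc a 1, x ≠ 0 := fun x hx => (ha₀.trans_le hx.1).ne'
  have hint : IntegrableOn (fun x : ℝ => x ^ σ * x) (Ioo a 1) :=
    ((ContinuousOn.rpow_const continuousOn_id fun x hx => Or.inl (hIcc x hx)).mul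
      continuousOn_id).integrableOn_Icc.mono_set Ioo_subset_Icc_self
  have hint_inv : IntegrableOn (fun x : ℝ => x⁻¹) (Ioo a 1) :=
    (continuousOn_id.inv₀ hIcc).integrableOn_Icc.mono_set Ioo_subset_Icc_self
  have hlog : ∫ x in Ioo a 1, x⁻¹ = -Real.log a := by
    rw [← integral_Ioc_eq_integral_Ioo, ← intervalIntegral.integral_of_le ha₁.le,
      integral_inv fun h => hIcc 0 (by rwa [uIcc_of_le ha₁.le] at h) rfl, one_div, Real.log_inv]
  rw [← hlog]
  refine setIntegral_mono_on hint_inv hint measurableSet_Ioo fun x hx => ?_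
  have hx₀ : 0 < x := ha₀.trans hx.1
  calc x⁻¹ = x ^ (-2 : ℝ) * x := by
        rw [Real.rpow_neg hx₀.le, Real.rpow_two]
        field_simp
    _ ≤ x ^ σ * x :=
        mul_le_mul_of_nonneg_right (Real.rpow_le_rpow_of_exponent_ge hx₀ hx.2.le hσ) hx₀.le

lemma tendsto_powerAverage_atTop {σ : ℝ} (hσ : σ ≤ -2) :
    Tendsto (fun a => powerAverage σ a 1) (𝓝[>] 0) atTop := by
  refine tendsto_atTop_mono' _ ?_ (tendsto_neg_atBot_atTop.comp Real.tendsto_log_nhdsGT_zero)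
  filter_upwards [Ioo_mem_nhdsGT zero_lt_one] with a ha
  have hlog := neg_log_le_integral_Ioo_rpow_mul_self hσ ha.1 ha.2
  have hmass : 1 ≤ (∫ x in Ioo a 1, x)⁻¹ := by
    rw [integral_Ioo_id ha.2.le]
    exact one_le_inv₀ (by nlinarith [ha.1, ha.2]) |>.2 (by nlinarith [ha.1])
  have hlog₀ : 0 ≤ -Real.log a := neg_nonneg.2 (Real.log_nonpos ha.1.le ha.2.le)
  exact hlog.trans (le_mul_of_one_le_left (hlog₀.trans hlog) hmass)

lemma tendsto_apProduct_atTop {p α : ℝ} (hp : 1 < p) (hα : α ≤ -2 ∨ 2 * p - 2 ≤ α) :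
    Tendsto (fun a => apProduct p α a 1) (𝓝[>] 0) atTop := by
  have hp1 : 0 < p - 1 := by linarith
  rcases hα with hα | hα
  · have hβ : -2 < -α / (p - 1) := by
      rw [lt_div_iff₀ hp1]
      nlinarith
    have hL : 0 < 2 / (-α / (p - 1) + 2) := div_pos two_pos (by linarith)
    exact (tendsto_powerAverage_atTop hα).atTop_mul_pos (Real.rpow_pos_of_pos hL _)
      ((tendsto_powerAverage_nhdsGT_zero hβ).rpow_const (Or.inl hL.ne'))
  · have hβ : -α / (p - 1) ≤ -2 := by
      rw [div_le_iff₀ hp1]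
      linarith
    exact (tendsto_powerAverage_nhdsGT_zero (by linarith)).pos_mul_atTop
      (div_pos two_pos (by linarith))
      ((tendsto_rpow_atTop hp1).comp (tendsto_powerAverage_atTop hβ))

theorem stmt_12 (p α : ℝ) (hp : 1 < p) :
    (∃ A : ℝ, ∀ a b : ℝ, 0 ≤ a → a < b →
      ((∫ x in Ioo a b, x)⁻¹ * ∫ x in Ioo a b, x ^ α * x) *
        ((∫ x in Ioo a b, x)⁻¹ * ∫ x in Ioo a b, x ^ (-α / (p - 1)) * x) ^ (p - 1) ≤ A)
    ↔ (-2 < α ∧ α < 2 * p - 2) := by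
  refine ⟨fun ⟨A, hA⟩ => ?_, fun ⟨h₁, h₂⟩ => exists_apProduct_le hp h₁ h₂⟩
  by_contra hα
  rw [not_and_or, not_lt, not_lt] at hα
  obtain ⟨a, hA', ha⟩ := ((tendsto_apProduct_atTop hp hα).eventually_gt_atTop A).and
    (Ioo_mem_nhdsGT zero_lt_one) |>.exists
  exact (hA a 1 ha.1.le ha.2).not_gt hA'
end

section
/- Let p ∈ [1,∞), γ ∈ (−p−1, −1), and let u ∈ 𝒮(ℝ) (Schwartz) restricted to [0,∞) satisfy u(0) = 0 and u″(0) = 0. Then u and u″ belong to L^p((0,∞), w_γ), and u belongs to W^{2,p}((0,∞), w_γ) if and only if u′(0) = 0, where w_γ(x) = x^γ. -/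
open MeasureTheory Set

/-! Near `0` a Schwartz function `g` with `g 0 = 0` satisfies `|g x| ≤ C x` (mean value theorem),
so `|g x| ^ p * x ^ γ ≤ C ^ p * x ^ (p + γ)`, which is integrable on `(0, 1]` as `p + γ > -1`;
on `(1, ∞)` the function is bounded and `x ^ γ` is integrable as `γ < -1`. This applies to `f`,
to `f''`, and to `f'` when `f'(0) = 0`. If `f'(0) ≠ 0`, then `|f'| ^ p` is bounded below by a
positive constant near `0`, and `x ^ γ` is not integrable at `0` since `γ ≤ -1`. -/

section WeightedIntegrability

variable {g : ℝ → ℝ} {p γ : ℝ}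

lemma continuousOn_abs_rpow_mul_rpow (hg : Continuous g) (hp : 0 ≤ p) :
    ContinuousOn (fun x => |g x| ^ p * x ^ γ) (Ioi 0) := by
  intro x hx
  exact ((hg.abs.rpow_const fun _ => Or.inr hp).continuousAt.mul
    (Real.continuousAt_rpow_const x γ (Or.inl (ne_of_gt hx)))).continuousWithinAt

lemma integrableOn_Ioc_abs_rpow_mul_rpow_of_abs_le_mul (hg : Continuous g) {C : ℝ}
    (hgC : ∀ x ∈ Ioc (0 : ℝ) 1, |g x| ≤ C * x) (hp : 0 ≤ p) (hpγ : -1 < p + γ) :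
    IntegrableOn (fun x => |g x| ^ p * x ^ γ) (Ioc 0 1) := by
  have hC : 0 ≤ C := by
    simpa using (abs_nonneg (g 1)).trans (hgC 1 ⟨one_pos, le_rfl⟩)
  have hdom : IntegrableOn (fun x : ℝ => C ^ p * x ^ (p + γ)) (Ioc 0 1) :=
    ((intervalIntegrable_iff_integrableOn_Ioc_of_le zero_le_one).mp
      (intervalIntegral.intervalIntegrable_rpow' hpγ)).const_mul _
  refine hdom.mono' (((continuousOn_abs_rpow_mul_rpow hg hp).mono Ioc_subset_Ioi_self)
    |>.aestronglyMeasurable measurableSet_Ioc) ?_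
  filter_upwards [ae_restrict_mem measurableSet_Ioc] with x hx
  have hx0 : 0 < x := hx.1
  calc ‖|g x| ^ p * x ^ γ‖ = |g x| ^ p * x ^ γ := Real.norm_of_nonneg (by positivity)
    _ ≤ (C * x) ^ p * x ^ γ := by gcongr; exact hgC x hx
    _ = C ^ p * x ^ (p + γ) := by rw [Real.mul_rpow hC hx0.le, mul_assoc, ← Real.rpow_add hx0]

lemma integrableOn_Ioi_one_abs_rpow_mul_rpow_of_abs_le (hg : Continuous g) {M : ℝ}
    (hgM : ∀ x, |g x| ≤ M) (hp : 0 ≤ p) (hγ : γ < -1) :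
    IntegrableOn (fun x => |g x| ^ p * x ^ γ) (Ioi 1) := by
  have hdom : IntegrableOn (fun x : ℝ => M ^ p * x ^ γ) (Ioi 1) :=
    (integrableOn_Ioi_rpow_of_lt hγ one_pos).const_mul _
  refine hdom.mono' (((continuousOn_abs_rpow_mul_rpow hg hp).mono (Ioi_subset_Ioi zero_le_one))
    |>.aestronglyMeasurable measurableSet_Ioi) ?_
  filter_upwards [ae_restrict_mem measurableSet_Ioi] with x hx
  have hx0 : (0 : ℝ) < x := one_pos.trans hx
  rw [Real.norm_of_nonneg (by positivity)]
  gcongr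
  exact hgM x

lemma not_integrableOn_Ioi_mul_rpow {h : ℝ → ℝ} (hh : ContinuousAt h 0) (h0 : 0 < h 0)
    (hγ : γ ≤ -1) : ¬ IntegrableOn (fun x => h x * x ^ γ) (Ioi 0) := by
  intro hint
  obtain ⟨δ, hδ, hlow⟩ :=
    Metric.eventually_nhds_iff.1 (hh.eventually (lt_mem_nhds (half_lt_self h0)))
  have hpow : IntegrableOn (fun x : ℝ => x ^ γ) (Ioo 0 δ) := by
    refine ((hint.mono_set Ioo_subset_Ioi_self).const_mul (2 / h 0)).mono'
      ((continuousOn_id.rpow_const fun x hx => Or.inl (ne_of_gt hx.1)).aestronglyMeasurable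
        measurableSet_Ioo) ?_
    filter_upwards [ae_restrict_mem measurableSet_Ioo] with x hx
    have hx0 : 0 < x := hx.1
    have hhx : h 0 / 2 < h x := hlow (by rw [Real.dist_eq, sub_zero, abs_of_pos hx0]; exact hx.2)
    rw [Real.norm_of_nonneg (by positivity), ← mul_assoc]
    refine le_mul_of_one_le_left (by positivity) ?_
    rw [div_mul_eq_mul_div, le_div_iff₀ h0]
    linarith
  linarith [(intervalIntegral.integrableOn_Ioo_rpow_iff hδ).1 hpow]

end WeightedIntegrability

namespace SchwartzMap

lemma coe_derivCLM (f : 𝓢(ℝ, ℝ)) : ⇑(derivCLM ℝ ℝ f) = deriv f :=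
  funext (derivCLM_apply ℝ f)

lemma abs_le_mul_abs_of_eq_zero (f : 𝓢(ℝ, ℝ)) (hf : f 0 = 0) (x : ℝ) :
    |f x| ≤ SchwartzMap.seminorm ℝ 0 0 (derivCLM ℝ ℝ f) * |x| := by
  have := Convex.norm_image_sub_le_of_norm_deriv_le (fun y _ => f.differentiableAt)
    (fun y _ => by simpa only [derivCLM_apply] using norm_le_seminorm ℝ (derivCLM ℝ ℝ f) y)
    convex_univ (mem_univ 0) (mem_univ x)
  simpa [hf, Real.norm_eq_abs] using this

lemma integrableOn_Ioi_abs_rpow_mul_rpow {p γ : ℝ} (f : 𝓢(ℝ, ℝ)) (hf : f 0 = 0) (hp : 0 ≤ p)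
    (h1 : -p - 1 < γ) (h2 : γ < -1) :
    IntegrableOn (fun x => |f x| ^ p * x ^ γ) (Ioi 0) := by
  rw [← Ioc_union_Ioi_eq_Ioi zero_le_one]
  refine .union (integrableOn_Ioc_abs_rpow_mul_rpow_of_abs_le_mul f.continuous
      (C := SchwartzMap.seminorm ℝ 0 0 (derivCLM ℝ ℝ f)) (fun x hx => ?_) hp (by linarith))
    (integrableOn_Ioi_one_abs_rpow_mul_rpow_of_abs_le f.continuous
      (M := SchwartzMap.seminorm ℝ 0 0 f) (fun x => ?_) hp h2)
  · simpa only [abs_of_pos hx.1] using f.abs_le_mul_abs_of_eq_zero hf x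
  · simpa only [Real.norm_eq_abs] using norm_le_seminorm ℝ f x

end SchwartzMap

theorem stmt_14 (p γ : ℝ) (hp : 1 ≤ p) (h1 : -p - 1 < γ) (h2 : γ < -1)
    (f : SchwartzMap ℝ ℝ) (h0 : f 0 = 0) (h0'' : deriv (deriv (⇑f)) 0 = 0) :
    IntegrableOn (fun x => |f x| ^ p * x ^ γ) (Ioi 0) ∧
    IntegrableOn (fun x => |deriv (deriv (⇑f)) x| ^ p * x ^ γ) (Ioi 0) ∧
    (IntegrableOn (fun x => |deriv (⇑f) x| ^ p * x ^ γ) (Ioi 0) ↔ deriv (⇑f) 0 = 0) := by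
  have hp0 : 0 ≤ p := zero_le_one.trans hp
  have hf' := f.coe_derivCLM
  have hf'' : ⇑(SchwartzMap.derivCLM ℝ ℝ (SchwartzMap.derivCLM ℝ ℝ f)) = deriv (deriv f) := by
    rw [SchwartzMap.coe_derivCLM, hf']
  refine ⟨f.integrableOn_Ioi_abs_rpow_mul_rpow h0 hp0 h1 h2, ?_, fun hint => ?_, fun h0' => ?_⟩
  · rw [← hf''] at h0'' ⊢
    exact SchwartzMap.integrableOn_Ioi_abs_rpow_mul_rpow _ h0'' hp0 h1 h2
  · by_contra hne
    have hcont : ContinuousAt (fun x => |deriv f x| ^ p) 0 :=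
      ((hf' ▸ (SchwartzMap.derivCLM ℝ ℝ f).continuous).abs.continuousAt).rpow_const
        (Or.inl (abs_ne_zero.2 hne))
    exact not_integrableOn_Ioi_mul_rpow hcont (by positivity) h2.le hint
  · rw [← hf'] at h0' ⊢
    exact SchwartzMap.integrableOn_Ioi_abs_rpow_mul_rpow _ h0' hp0 h1 h2
end

section
/- Let p ∈ [1,∞) and γ ∈ [0, p−1), and set w_γ(x) = x^γ on (0,∞). Then every u ∈ W^{1,p}((0,∞), w_γ) has a continuous representative with sup_{x ≥ 0} |u(x)| ≤ C_{p,γ} ‖u‖_{W^{1,p}((0,∞), w_γ)} and u(x) → 0 as x → ∞. -/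
open MeasureTheory Set Filter
open scoped Topology

/-!
Writing `u x = ∫_x^{x+1} (u - u' ζ)` with the cut-off `ζ t = x + 1 - t` gives
`|u x| ≤ ∫_x^{x+1} (|u| + |u'|)`. By Hölder's inequality against the weight `s ^ γ`, each of these
integrals is at most `(∫_{s > x} |f|^p s^γ)^(1/p) · (∫_x^{x+1} s^(-γ/(p-1)))^(1/q)`, and since
`0 ≤ γ/(p-1) < 1` the last factor is at most `∫_0^1 s^(-γ/(p-1)) = (1 - γ/(p-1))⁻¹`. This bounds
`|u x|` uniformly by the weighted norms, and by their tails over `(x, ∞)`, which tend to `0`.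
The same Hölder bound makes `u'` integrable near `0`, so `u` extends continuously to `0`.
-/

section WeightedHolder

variable {α : Type*} [MeasurableSpace α] {μ : Measure α} {p q : ℝ}

lemma memLp_ofReal_of_integrable_rpow {g : α → ℝ} (hp : 0 < p) (hg : AEStronglyMeasurable g μ)
    (hg0 : 0 ≤ᵐ[μ] g) (hgp : Integrable (fun x => g x ^ p) μ) :
    MemLp g (ENNReal.ofReal p) μ := by
  refine (integrable_norm_rpow_iff hg (by simpa using hp) ENNReal.ofReal_ne_top).1 ?_
  rw [ENNReal.toReal_ofReal hp.le]
  refine hgp.congr ?_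
  filter_upwards [hg0] with x hx
  rw [Real.norm_of_nonneg hx]

-- Write `|f| = (|f| w ^ (1/p)) * w ^ (-1/p)` and apply Hölder's inequality to the two factors.
theorem integrable_and_integral_abs_le_of_weighted (hpq : p.HolderConjugate q) {f w : α → ℝ}
    (hf : AEStronglyMeasurable f μ) (hw : AEStronglyMeasurable w μ) (hw0 : ∀ᵐ x ∂μ, 0 < w x)
    (hfw : Integrable (fun x => |f x| ^ p * w x) μ)
    (hw' : Integrable (fun x => w x ^ (-(p - 1)⁻¹)) μ) :
    Integrable f μ ∧ ∫ x, |f x| ∂μ ≤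
      (∫ x, |f x| ^ p * w x ∂μ) ^ (1 / p) * (∫ x, w x ^ (-(p - 1)⁻¹) ∂μ) ^ (1 / q) := by
  set F : α → ℝ := fun x => |f x| * w x ^ (1 / p)
  set H : α → ℝ := fun x => w x ^ (-(1 / p))
  have hp0 := hpq.pos
  have hFH : ∀ᵐ x ∂μ, F x * H x = |f x| := by
    filter_upwards [hw0] with x hx
    rw [mul_assoc, ← Real.rpow_add hx, add_neg_cancel, Real.rpow_zero, mul_one]
  have hFp : ∀ᵐ x ∂μ, F x ^ p = |f x| ^ p * w x := by
    filter_upwards [hw0] with x hx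
    rw [Real.mul_rpow (abs_nonneg _) (Real.rpow_nonneg hx.le _), ← Real.rpow_mul hx.le,
      one_div_mul_cancel hp0.ne', Real.rpow_one]
  have hHq : ∀ᵐ x ∂μ, H x ^ q = w x ^ (-(p - 1)⁻¹) := by
    filter_upwards [hw0] with x hx
    rw [← Real.rpow_mul hx.le, hpq.conjugate_eq]
    congr 1
    field_simp [hpq.sub_one_ne_zero]
  have hF0 : 0 ≤ᵐ[μ] F := by
    filter_upwards [hw0] with x hx
    exact mul_nonneg (abs_nonneg _) (Real.rpow_nonneg hx.le _)
  have hH0 : 0 ≤ᵐ[μ] H := by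
    filter_upwards [hw0] with x hx
    exact Real.rpow_nonneg hx.le _
  have hFm : AEStronglyMeasurable F μ :=
    hf.norm.mul (hw.aemeasurable.pow_const _).aestronglyMeasurable
  have hHm : AEStronglyMeasurable H μ := (hw.aemeasurable.pow_const _).aestronglyMeasurable
  have hFLp : MemLp F (ENNReal.ofReal p) μ :=
    memLp_ofReal_of_integrable_rpow hp0 hFm hF0 (hfw.congr (hFp.mono fun _ h => h.symm))
  have hHLq : MemLp H (ENNReal.ofReal q) μ :=
    memLp_ofReal_of_integrable_rpow hpq.symm.pos hHm hH0 (hw'.congr (hHq.mono fun _ h => h.symm))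
  have := hpq.ennrealOfReal
  refine ⟨(integrable_norm_iff hf).1 ?_, ?_⟩
  · simpa only [Real.norm_eq_abs] using (hFLp.integrable_mul hHLq).congr hFH
  · have := integral_mul_le_Lp_mul_Lq_of_nonneg hpq hF0 hH0 hFLp hHLq
    rwa [integral_congr_ae hFH, integral_congr_ae hFp, integral_congr_ae hHq] at this

end WeightedHolder

section Sobolev

variable {u u' : ℝ → ℝ}

theorem abs_le_integral_abs_add_integral_abs_deriv {x : ℝ}
    (hderiv : ∀ t ∈ uIcc x (x + 1), HasDerivAt u (u' t) t)
    (hu' : IntervalIntegrable u' volume x (x + 1)) :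
    |u x| ≤ (∫ t in x..x + 1, |u t|) + ∫ t in x..x + 1, |u' t| := by
  have hle : x ≤ x + 1 := by linarith
  have hu : IntervalIntegrable u volume x (x + 1) :=
    ContinuousOn.intervalIntegrable fun t ht => (hderiv t ht).continuousAt.continuousWithinAt
  have hu'ζ : IntervalIntegrable (fun t => u' t * (x + 1 - t)) volume x (x + 1) :=
    hu'.mul_continuousOn (by fun_prop)
  have hrepr : ∫ t in x..x + 1, (u' t * (x + 1 - t) - u t) = -u x := by
    rw [intervalIntegral.integral_eq_sub_of_hasDerivAt (f := fun t => u t * (x + 1 - t))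
      (fun t ht => ((hderiv t ht).mul ((hasDerivAt_id t).const_sub (x + 1))).congr_deriv
        (by simp only [id]; ring)) (hu'ζ.sub hu)]
    ring
  calc |u x| = |∫ t in x..x + 1, (u' t * (x + 1 - t) - u t)| := by rw [hrepr, abs_neg]
    _ ≤ ∫ t in x..x + 1, |u' t * (x + 1 - t) - u t| :=
        intervalIntegral.abs_integral_le_integral_abs hle
    _ ≤ ∫ t in x..x + 1, (|u t| + |u' t|) := by
        refine intervalIntegral.integral_mono_on hle (hu'ζ.sub hu).abs (hu.abs.add hu'.abs)
          fun t ht => ?_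
        have hζ : |x + 1 - t| ≤ 1 := abs_le.2 ⟨by linarith [ht.2], by linarith [ht.1]⟩
        calc |u' t * (x + 1 - t) - u t| ≤ |u' t| * |x + 1 - t| + |u t| := by
              rw [← abs_mul]; exact abs_sub _ _
          _ ≤ |u' t| * 1 + |u t| := by gcongr
          _ = |u t| + |u' t| := by ring
    _ = (∫ t in x..x + 1, |u t|) + ∫ t in x..x + 1, |u' t| :=
        intervalIntegral.integral_add hu.abs hu'.abs

lemma aestronglyMeasurable_of_forall_hasDerivAt {s : Set ℝ} (hs : MeasurableSet s)
    (hderiv : ∀ x ∈ s, HasDerivAt u (u' x) x) : AEStronglyMeasurable u' (volume.restrict s) :=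
  (measurable_deriv u).aestronglyMeasurable.congr <|
    (ae_restrict_mem hs).mono fun x hx => (hderiv x hx).deriv

-- The primitive of `u'` extended by zero to `(-∞, 0]` is continuous on all of `ℝ`.
theorem exists_continuous_eqOn_Ioi_of_hasDerivAt (hderiv : ∀ x ∈ Ioi 0, HasDerivAt u (u' x) x)
    (hloc : ∀ b, IntegrableOn u' (Ioc 0 b)) : ∃ v : ℝ → ℝ, Continuous v ∧ EqOn v u (Ioi 0) := by
  have hpos : ∀ {y t : ℝ}, 0 < y → t ∈ uIcc 1 y → 0 < t := fun hy ht =>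
    (lt_min one_pos hy).trans_le ht.1
  have hint : ∀ a b, IntervalIntegrable ((Ioi 0).indicator u') volume a b := fun a b => by
    rw [intervalIntegrable_iff, integrableOn_indicator_iff measurableSet_Ioi]
    exact (hloc (max a b)).mono_set fun t ht => ⟨ht.1, ht.2.2⟩
  refine ⟨fun y => u 1 + ∫ t in 1..y, (Ioi 0).indicator u' t,
    continuous_const.add (intervalIntegral.continuous_primitive hint 1), fun y hy => ?_⟩
  have hEq : EqOn ((Ioi 0).indicator u') u' (uIcc 1 y) := fun t ht =>
    indicator_of_mem (hpos hy ht) u'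
  dsimp only
  rw [intervalIntegral.integral_congr hEq, intervalIntegral.integral_eq_sub_of_hasDerivAt
    (fun t ht => hderiv t (hpos hy ht)) ((hint 1 y).congr (hEq.mono uIoc_subset_uIcc))]
  ring

end Sobolev

lemma tendsto_setIntegral_Ioi_atTop_zero {E : Type*} [NormedAddCommGroup E] [NormedSpace ℝ E]
    {f : ℝ → E} {a : ℝ} (hf : IntegrableOn f (Ioi a)) :
    Tendsto (fun x => ∫ s in Ioi x, f s) atTop (𝓝 0) := by
  have hempty : ⋂ x : ℝ, Ioi x = ∅ := iInter_eq_empty_iff.2 fun x => ⟨x, lt_irrefl x⟩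
  simpa [hempty] using tendsto_setIntegral_of_antitone (fun x => measurableSet_Ioi)
    (fun _ _ h => Ioi_subset_Ioi h) ⟨a, hf⟩

lemma abs_rpow_mul_rpow_nonneg {p γ s : ℝ} (a : ℝ) (hs : 0 ≤ s) : 0 ≤ |a| ^ p * s ^ γ :=
  mul_nonneg (Real.rpow_nonneg (abs_nonneg a) p) (Real.rpow_nonneg hs γ)

lemma setIntegral_abs_rpow_mul_rpow_mono {p γ : ℝ} {f : ℝ → ℝ} {s t : Set ℝ} (hst : s ⊆ t)
    (ht : MeasurableSet t) (ht0 : t ⊆ Ici 0) (hfw : IntegrableOn (fun x => |f x| ^ p * x ^ γ) t) :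
    ∫ x in s, |f x| ^ p * x ^ γ ≤ ∫ x in t, |f x| ^ p * x ^ γ := by
  refine setIntegral_mono_set hfw ?_ hst.eventuallyLE
  filter_upwards [ae_restrict_mem ht] with x hx
  exact abs_rpow_mul_rpow_nonneg _ (ht0 hx)

noncomputable def weightedTailNorm (p γ : ℝ) (f : ℝ → ℝ) (x : ℝ) : ℝ :=
  (∫ s in Ioi x, |f s| ^ p * s ^ γ) ^ (1 / p)

section WeightedTailNorm

variable {p γ : ℝ} {f : ℝ → ℝ}

lemma weightedTailNorm_le_weightedTailNorm_zero (hp : 0 < p)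
    (hfw : IntegrableOn (fun s => |f s| ^ p * s ^ γ) (Ioi 0)) {x : ℝ} (hx : 0 ≤ x) :
    weightedTailNorm p γ f x ≤ weightedTailNorm p γ f 0 := by
  refine Real.rpow_le_rpow ?_ ?_ (by positivity)
  · exact setIntegral_nonneg measurableSet_Ioi fun s hs =>
      abs_rpow_mul_rpow_nonneg _ (hx.trans hs.le)
  · exact setIntegral_abs_rpow_mul_rpow_mono (Ioi_subset_Ioi hx) measurableSet_Ioi
      Ioi_subset_Ici_self hfw

lemma tendsto_weightedTailNorm_atTop (hp : 0 < p)
    (hfw : IntegrableOn (fun s => |f s| ^ p * s ^ γ) (Ioi 0)) :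
    Tendsto (weightedTailNorm p γ f) atTop (𝓝 0) := by
  have := (tendsto_setIntegral_Ioi_atTop_zero hfw).rpow_const (p := 1 / p) (Or.inr (by positivity))
  rwa [Real.zero_rpow (by positivity)] at this

end WeightedTailNorm

section PowerWeight

variable {p q γ : ℝ}

lemma rpow_rpow_neg_inv_sub_one {s : ℝ} (hs : 0 ≤ s) :
    (s ^ γ) ^ (-(p - 1)⁻¹) = s ^ (-(γ / (p - 1))) := by
  rw [← Real.rpow_mul hs, div_eq_mul_inv, mul_neg]

theorem integrableOn_and_setIntegral_abs_le_of_power_weight (hpq : p.HolderConjugate q)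
    {f : ℝ → ℝ} {E : Set ℝ} (hE : MeasurableSet E) (hE0 : E ⊆ Ioi 0)
    (hf : AEStronglyMeasurable f (volume.restrict E))
    (hfw : IntegrableOn (fun s => |f s| ^ p * s ^ γ) E)
    (hw : IntegrableOn (fun s : ℝ => s ^ (-(γ / (p - 1)))) E) :
    IntegrableOn f E ∧ ∫ s in E, |f s| ≤
      (∫ s in E, |f s| ^ p * s ^ γ) ^ (1 / p) * (∫ s in E, s ^ (-(γ / (p - 1)))) ^ (1 / q) := by
  have hdual : ∀ᵐ s ∂(volume.restrict E), s ^ (-(γ / (p - 1))) = (s ^ γ) ^ (-(p - 1)⁻¹) := by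
    filter_upwards [ae_restrict_mem hE] with s hs
    exact (rpow_rpow_neg_inv_sub_one (hE0 hs).le).symm
  rw [integral_congr_ae hdual]
  refine integrable_and_integral_abs_le_of_weighted hpq hf
    (measurable_id.pow_const γ).aestronglyMeasurable ?_ hfw (hw.congr hdual)
  filter_upwards [ae_restrict_mem hE] with s hs
  exact Real.rpow_pos_of_pos (hE0 hs) γ

lemma integrableOn_rpow_neg_Ioc_zero (hp : 1 < p) (hγ : γ < p - 1) (b : ℝ) :
    IntegrableOn (fun s : ℝ => s ^ (-(γ / (p - 1)))) (Ioc 0 b) := by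
  rcases le_or_gt b 0 with hb | hb
  · simp [Ioc_eq_empty (not_lt.mpr hb)]
  · exact (intervalIntegrable_iff_integrableOn_Ioc_of_le hb.le).1
      (intervalIntegral.intervalIntegrable_rpow' (neg_lt_neg ((div_lt_one (by linarith)).2 hγ)))

theorem integrableOn_Ioc_zero_of_power_weight (hpq : p.HolderConjugate q) (hγ : γ < p - 1)
    {f : ℝ → ℝ} (hf : AEStronglyMeasurable f (volume.restrict (Ioi 0)))
    (hfw : IntegrableOn (fun s => |f s| ^ p * s ^ γ) (Ioi 0)) (b : ℝ) :
    IntegrableOn f (Ioc 0 b) :=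
  (integrableOn_and_setIntegral_abs_le_of_power_weight hpq measurableSet_Ioc Ioc_subset_Ioi_self
    (hf.mono_measure (Measure.restrict_mono Ioc_subset_Ioi_self le_rfl))
    (hfw.mono_set Ioc_subset_Ioi_self) (integrableOn_rpow_neg_Ioc_zero hpq.lt hγ b)).1

-- Translating `[x, x + 1]` to `[0, 1]` only increases the decreasing function `s ^ (-r)`.
lemma integral_rpow_neg_le {r x : ℝ} (hr0 : 0 ≤ r) (hr1 : r < 1) (hx : 0 ≤ x) :
    ∫ s in x..x + 1, s ^ (-r) ≤ (1 - r)⁻¹ := by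
  have hint : IntervalIntegrable (fun t : ℝ => t ^ (-r)) volume 0 1 :=
    intervalIntegral.intervalIntegrable_rpow' (by linarith)
  calc ∫ s in x..x + 1, s ^ (-r) = ∫ t in (0 : ℝ)..1, (t + x) ^ (-r) := by
        rw [intervalIntegral.integral_comp_add_right (fun s : ℝ => s ^ (-r)) x, zero_add,
          add_comm 1 x]
    _ ≤ ∫ t in (0 : ℝ)..1, t ^ (-r) := by
        refine intervalIntegral.integral_mono_on_of_le_Ioo zero_le_one ?_ hint fun t ht => ?_
        · simpa using (intervalIntegral.intervalIntegrable_rpow' (a := x) (b := x + 1)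
            (r := -r) (by linarith)).comp_add_right x
        · exact Real.rpow_le_rpow_of_nonpos ht.1 (by linarith) (by linarith)
    _ = (1 - r)⁻¹ := by
        rw [integral_rpow (Or.inl (by linarith)), Real.one_rpow,
          Real.zero_rpow (by linarith), sub_zero, one_div, neg_add_eq_sub]

theorem integral_abs_le_of_power_weight (hpq : p.HolderConjugate q) (h0 : 0 ≤ γ)
    (h1 : γ < p - 1) {f : ℝ → ℝ} {x : ℝ} (hx : 0 ≤ x)
    (hf : AEStronglyMeasurable f (volume.restrict (Ioi x)))
    (hfw : IntegrableOn (fun s => |f s| ^ p * s ^ γ) (Ioi x)) :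
    ∫ s in x..x + 1, |f s| ≤
      (1 - γ / (p - 1))⁻¹ ^ (1 / q) * weightedTailNorm p γ f x := by
  have hp1 : 0 < p - 1 := by linarith
  have hsub : Ioc x (x + 1) ⊆ Ioi x := Ioc_subset_Ioi_self
  have hpos : Ioi x ⊆ Ioi 0 := Ioi_subset_Ioi hx
  obtain ⟨-, hbound⟩ := integrableOn_and_setIntegral_abs_le_of_power_weight hpq measurableSet_Ioc
    (hsub.trans hpos) (hf.mono_measure (Measure.restrict_mono hsub le_rfl)) (hfw.mono_set hsub)
    ((integrableOn_rpow_neg_Ioc_zero hpq.lt h1 (x + 1)).mono_set (Ioc_subset_Ioc_left hx))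
  have hfw_mono : ∫ s in Ioc x (x + 1), |f s| ^ p * s ^ γ ≤ ∫ s in Ioi x, |f s| ^ p * s ^ γ :=
    setIntegral_abs_rpow_mul_rpow_mono hsub measurableSet_Ioi
      (hpos.trans Ioi_subset_Ici_self) hfw
  have hdual : ∫ s in Ioc x (x + 1), s ^ (-(γ / (p - 1))) ≤ (1 - γ / (p - 1))⁻¹ := by
    rw [← intervalIntegral.integral_of_le (by linarith)]
    exact integral_rpow_neg_le (div_nonneg h0 hp1.le) ((div_lt_one hp1).2 h1) hx
  have hfw0 : 0 ≤ ∫ s in Ioc x (x + 1), |f s| ^ p * s ^ γ :=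
    setIntegral_nonneg measurableSet_Ioc fun s hs => abs_rpow_mul_rpow_nonneg _ (hx.trans hs.1.le)
  have hdual0 : 0 ≤ ∫ s in Ioc x (x + 1), s ^ (-(γ / (p - 1))) :=
    setIntegral_nonneg measurableSet_Ioc fun s hs => Real.rpow_nonneg (hx.trans hs.1.le) _
  have hp' : 0 ≤ 1 / p := one_div_nonneg.2 hpq.nonneg
  have hq' : 0 ≤ 1 / q := one_div_nonneg.2 hpq.symm.nonneg
  rw [intervalIntegral.integral_of_le (by linarith), mul_comm]
  exact hbound.trans (mul_le_mul (Real.rpow_le_rpow hfw0 hfw_mono hp')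
    (Real.rpow_le_rpow hdual0 hdual hq') (Real.rpow_nonneg hdual0 _)
    (Real.rpow_nonneg (hfw0.trans hfw_mono) _))

theorem abs_le_weightedTailNorm (hpq : p.HolderConjugate q) (h0 : 0 ≤ γ) (h1 : γ < p - 1)
    {u u' : ℝ → ℝ} (hderiv : ∀ x ∈ Ioi 0, HasDerivAt u (u' x) x)
    (hu : IntegrableOn (fun s => |u s| ^ p * s ^ γ) (Ioi 0))
    (hu' : IntegrableOn (fun s => |u' s| ^ p * s ^ γ) (Ioi 0)) {x : ℝ} (hx : 0 < x) :
    |u x| ≤ (1 - γ / (p - 1))⁻¹ ^ (1 / q) *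
      (weightedTailNorm p γ u x + weightedTailNorm p γ u' x) := by
  have hsub : Ioi x ⊆ Ioi 0 := Ioi_subset_Ioi hx.le
  have hum : AEStronglyMeasurable u (volume.restrict (Ioi x)) :=
    ContinuousOn.aestronglyMeasurable
      (fun y hy => (hderiv y (hsub hy)).continuousAt.continuousWithinAt) measurableSet_Ioi
  have hu'm : AEStronglyMeasurable u' (volume.restrict (Ioi 0)) :=
    aestronglyMeasurable_of_forall_hasDerivAt measurableSet_Ioi hderiv
  have hu'int : IntervalIntegrable u' volume x (x + 1) :=
    (intervalIntegrable_iff_integrableOn_Ioc_of_le (by linarith)).2 <|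
      (integrableOn_Ioc_zero_of_power_weight hpq h1 hu'm hu' (x + 1)).mono_set
        (Ioc_subset_Ioc_left hx.le)
  have hderiv' : ∀ t ∈ uIcc x (x + 1), HasDerivAt u (u' t) t := fun t ht =>
    hderiv t (hx.trans_le (by simpa [uIcc_of_le] using ht.1))
  calc |u x| ≤ (∫ t in x..x + 1, |u t|) + ∫ t in x..x + 1, |u' t| :=
        abs_le_integral_abs_add_integral_abs_deriv hderiv' hu'int
    _ ≤ _ := by
        rw [mul_add]
        exact add_le_add
          (integral_abs_le_of_power_weight hpq h0 h1 hx.le hum (hu.mono_set hsub))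
          (integral_abs_le_of_power_weight hpq h0 h1 hx.le
            (hu'm.mono_measure (Measure.restrict_mono hsub le_rfl)) (hu'.mono_set hsub))

end PowerWeight

theorem stmt_15_general (p γ : ℝ) (h0 : 0 ≤ γ) (h1 : γ < p - 1) :
    ∃ C : ℝ, 0 < C ∧ ∀ u u' : ℝ → ℝ,
      (∀ x ∈ Ioi (0:ℝ), HasDerivAt u (u' x) x) →
      IntegrableOn (fun x => |u x| ^ p * x ^ γ) (Ioi 0) →
      IntegrableOn (fun x => |u' x| ^ p * x ^ γ) (Ioi 0) →
      ∃ v : ℝ → ℝ, ContinuousOn v (Ici 0) ∧ (∀ x ∈ Ioi (0:ℝ), v x = u x) ∧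
        Filter.Tendsto v Filter.atTop (nhds 0) ∧
        ∀ x ∈ Ici (0:ℝ), |v x| ≤ C *
          ((∫ x in Ioi (0:ℝ), |u x| ^ p * x ^ γ) ^ (1 / p) +
           (∫ x in Ioi (0:ℝ), |u' x| ^ p * x ^ γ) ^ (1 / p)) := by
  have hp1 : 1 < p := by linarith
  have hpq := Real.HolderConjugate.conjExponent hp1
  have hK : 0 < (1 - γ / (p - 1))⁻¹ := inv_pos.2 (sub_pos.2 ((div_lt_one (by linarith)).2 h1))
  set C := (1 - γ / (p - 1))⁻¹ ^ (1 / p.conjExponent)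
  refine ⟨C, Real.rpow_pos_of_pos hK _, fun u u' hderiv hu hu' => ?_⟩
  obtain ⟨v, hv, hvu⟩ := exists_continuous_eqOn_Ioi_of_hasDerivAt hderiv
    (integrableOn_Ioc_zero_of_power_weight hpq h1
      (aestronglyMeasurable_of_forall_hasDerivAt measurableSet_Ioi hderiv) hu')
  have hbound : ∀ x ∈ Ioi (0 : ℝ),
      |v x| ≤ C * (weightedTailNorm p γ u x + weightedTailNorm p γ u' x) := fun x hx => by
    rw [hvu hx]
    exact abs_le_weightedTailNorm hpq h0 h1 hderiv hu hu' hx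
  refine ⟨v, hv.continuousOn, fun x hx => hvu hx, ?_, ?_⟩
  · refine squeeze_zero_norm' ((eventually_gt_atTop 0).mono fun x hx => hbound x hx) ?_
    simpa using ((tendsto_weightedTailNorm_atTop hpq.pos hu).add
      (tendsto_weightedTailNorm_atTop hpq.pos hu')).const_mul _
  · have hclosed :
        IsClosed {x | |v x| ≤ C * (weightedTailNorm p γ u 0 + weightedTailNorm p γ u' 0)} :=
      isClosed_le (by fun_prop) continuous_const
    rw [← closure_Ioi]
    refine hclosed.closure_subset_iff.2 fun x hx => (hbound x hx).trans ?_
    gcongr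
    exacts [weightedTailNorm_le_weightedTailNorm_zero hpq.pos hu hx.le,
      weightedTailNorm_le_weightedTailNorm_zero hpq.pos hu' hx.le]

theorem stmt_15 (p γ : ℝ) (hp : 1 ≤ p) (h0 : 0 ≤ γ) (h1 : γ < p - 1) :
    ∃ C : ℝ, 0 < C ∧ ∀ u u' : ℝ → ℝ,
      (∀ x ∈ Ioi (0:ℝ), HasDerivAt u (u' x) x) →
      IntegrableOn (fun x => |u x| ^ p * x ^ γ) (Ioi 0) →
      IntegrableOn (fun x => |u' x| ^ p * x ^ γ) (Ioi 0) →
      ∃ v : ℝ → ℝ, ContinuousOn v (Ici 0) ∧ (∀ x ∈ Ioi (0:ℝ), v x = u x) ∧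
        Filter.Tendsto v Filter.atTop (nhds 0) ∧
        ∀ x ∈ Ici (0:ℝ), |v x| ≤ C *
          ((∫ x in Ioi (0:ℝ), |u x| ^ p * x ^ γ) ^ (1 / p) +
           (∫ x in Ioi (0:ℝ), |u' x| ^ p * x ^ γ) ^ (1 / p)) :=
  stmt_15_general p γ h0 h1
end
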